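/- arXiv:2203.02952 — 16 statements merged into one kernel-verified Lean document; each statement's English description precedes it below -/
import Mathlib

section
/- Let A be a commutative ring and R a zero-divisor relation on A. Consider the loopless graph whose vertex set is the set of R-equivalence classes of nonzero zero-divisors of A, where two distinct classes [a] and [b] are adjacent if and only if ab = 0 (this adjacency is well defined because R is a zero-divisor relation). If this graph is nonempty, then it is connected and its diameter is at most 3. -/
/-- The set of nonzero zero-divisors of `A`. -/
def nzZeroDivisors (A : Type*) [CommRing A] : Type _ :=
  {a : A // a ≠ 0 ∧ ∃ b : A, b ≠ 0 ∧ a * b = 0}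

/-- The setoid on the nonzero zero-divisors of `A` induced by an equivalence
relation `R` on `A`. -/
def zdSetoid {A : Type*} [CommRing A] (R : A → A → Prop) (hR : Equivalence R) :
    Setoid (nzZeroDivisors A) :=
  ⟨fun a b => R a.1 b.1, ⟨fun _ => hR.refl _, fun h => hR.symm h, fun h h' => hR.trans h h'⟩⟩

/-- The (loopless) zero-divisor graph on the `R`-classes of nonzero zero-divisors of `A`:
two distinct classes `[a]`, `[b]` are adjacent iff `a * b = 0`.  (When `R` is a
zero-divisor relation this adjacency does not depend on the chosen representatives.) -/
def zdGraph {A : Type*} [CommRing A] (R : A → A → Prop) (hR : Equivalence R) :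
    SimpleGraph (Quotient (zdSetoid R hR)) where
  Adj x y := x ≠ y ∧
    ∃ a b : nzZeroDivisors A, Quotient.mk (zdSetoid R hR) a = x ∧
      Quotient.mk (zdSetoid R hR) b = y ∧ a.1 * b.1 = 0
  symm := by
    constructor
    rintro x y ⟨hxy, a, b, ha, hb, hab⟩
    exact ⟨hxy.symm, b, a, hb, ha, by rwa [mul_comm]⟩
  loopless := by
    constructor
    rintro x ⟨hxx, -⟩
    exact hxx rfl

/-- Let `R` be a zero-divisor relation on a commutative ring `A`.
If the loopless compressed zero-divisor graph on the `R`-classes of nonzero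
zero-divisors is nonempty, then it is connected with diameter at most `3`. -/
theorem zdGraph_connected_and_diam_le_three
    {A : Type*} [CommRing A] (R : A → A → Prop) (hR : Equivalence R)
    (hzd : ∀ a a' b b' : A, R a a' → R b b' → a * b = 0 → a' * b' = 0) :
    Nonempty (Quotient (zdSetoid R hR)) →
      (zdGraph R hR).Connected ∧
        ∀ x y : Quotient (zdSetoid R hR), (zdGraph R hR).dist x y ≤ 3 := by
  intro hne
  have adj : ∀ u v : nzZeroDivisors A, ¬ R u.1 v.1 → u.1 * v.1 = 0 →
      (zdGraph R hR).Adj (Quotient.mk (zdSetoid R hR) u) (Quotient.mk (zdSetoid R hR) v) := by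
    intro u v hnr h0
    exact ⟨fun he => hnr (Quotient.exact he), u, v, rfl, rfl, h0⟩
  have key : ∀ u v : nzZeroDivisors A,
      ∃ p : (zdGraph R hR).Walk (Quotient.mk (zdSetoid R hR) u) (Quotient.mk (zdSetoid R hR) v),
        p.length ≤ 3 := by
    intro u v
    by_cases hr : R u.1 v.1
    · have h : Quotient.mk (zdSetoid R hR) u = Quotient.mk (zdSetoid R hR) v :=
        Quotient.sound hr
      rw [h]
      exact ⟨.nil, by simp⟩
    by_cases h1 : u.1 * v.1 = 0
    · exact ⟨.cons (adj u v hr h1) .nil, by simp⟩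
    by_cases hc : ∃ c : nzZeroDivisors A, u.1 * c.1 = 0 ∧ c.1 * v.1 = 0
    · obtain ⟨c, huc, hcv⟩ := hc
      have h2 : ¬ R u.1 c.1 := fun h =>
        h1 (hzd c.1 u.1 v.1 v.1 (hR.symm h) (hR.refl _) hcv)
      have h3 : ¬ R c.1 v.1 := fun h =>
        h1 (hzd u.1 u.1 c.1 v.1 (hR.refl _) h huc)
      exact ⟨.cons (adj u c h2 huc) (.cons (adj c v h3 hcv) .nil), by simp⟩
    · obtain ⟨hu0, c0, hc0, huc⟩ := u.2
      obtain ⟨hv0, d0, hd0, hvd⟩ := v.2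
      have hcu : c0 * u.1 = 0 := by rw [mul_comm]; exact huc
      have hdv : d0 * v.1 = 0 := by rw [mul_comm]; exact hvd
      set c : nzZeroDivisors A := ⟨c0, hc0, u.1, hu0, hcu⟩ with hcdef
      set d : nzZeroDivisors A := ⟨d0, hd0, v.1, hv0, hdv⟩ with hddef
      have hcv : c0 * v.1 ≠ 0 := fun h => hc ⟨c, huc, h⟩
      have hud : u.1 * d0 ≠ 0 := fun h => hc ⟨d, h, hdv⟩
      have hcd : c0 * d0 = 0 := by
        by_contra hne0
        exact hc ⟨⟨c0 * d0, hne0, u.1, hu0, by rw [mul_comm, ← mul_assoc, huc, zero_mul]⟩,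
          by rw [← mul_assoc, huc, zero_mul],
          by rw [mul_assoc, hdv, mul_zero]⟩
      have e1 : ¬ R u.1 c0 := fun h =>
        hud (hzd c0 u.1 d0 d0 (hR.symm h) (hR.refl _) hcd)
      have e2 : ¬ R c0 d0 := fun h =>
        hcv (hzd d0 c0 v.1 v.1 (hR.symm h) (hR.refl _) hdv)
      have e3 : ¬ R d0 v.1 := fun h =>
        hcv (hzd c0 c0 d0 v.1 (hR.refl _) h hcd)
      exact ⟨.cons (adj u c e1 huc)
        (.cons (adj c d e2 hcd) (.cons (adj d v e3 hdv) .nil)), by simp⟩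
  have hpre : (zdGraph R hR).Preconnected := by
    intro x y
    induction x using Quotient.ind with | _ u =>
    induction y using Quotient.ind with | _ v =>
    obtain ⟨p, -⟩ := key u v
    exact ⟨p⟩
  haveI := hne
  refine ⟨⟨hpre⟩, ?_⟩
  intro x y
  induction x using Quotient.ind with | _ u =>
  induction y using Quotient.ind with | _ v =>
  obtain ⟨p, hp⟩ := key u v
  exact le_trans (SimpleGraph.dist_le p) hp
end

section
/- Let {R_A} be a family assigning to every commutative ring A an equivalence relation R_A on A, which is functorial (for every ring homomorphism f : A → B and all a, a' ∈ A, a R_A a' implies f(a) R_B f(a')) and non-degenerate (for every ring A and a ∈ A, a R_A 0 implies a = 0). Then each R_A is finer than the relation of generating the same principal ideal: for every commutative ring A and all a, b ∈ A, a R_A b implies (a) = (b). -/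
universe u

/-- Let `{R_A}` be a functorial, non-degenerate family of equivalence
relations on commutative rings.  Then each `R_A` is finer than the relation of
generating the same principal ideal. -/
theorem functorial_nondegenerate_finer_than_assoc
    (R : ∀ (A : Type u) [CommRing A], A → A → Prop)
    (hEquiv : ∀ (A : Type u) [CommRing A], Equivalence (R A))
    (hFunc : ∀ (A B : Type u) [CommRing A] [CommRing B] (f : A →+* B) (a a' : A),
      R A a a' → R B (f a) (f a'))
    (hNonDeg : ∀ (A : Type u) [CommRing A] (a : A), R A a 0 → a = 0) :
    ∀ (A : Type u) [CommRing A] (a b : A), R A a b →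
      Ideal.span {a} = Ideal.span {b} := by
  have key : ∀ (A : Type u) [CommRing A] (a b : A), R A a b → a ∈ Ideal.span {b} := by
    intro A _ a b hab
    set I := Ideal.span ({b} : Set A)
    have hb : b ∈ I := Ideal.subset_span rfl
    have h := hFunc A (A ⧸ I) (Ideal.Quotient.mk I) a b hab
    rw [show (Ideal.Quotient.mk I) b = 0 from (Ideal.Quotient.eq_zero_iff_mem).mpr hb] at h
    have := hNonDeg (A ⧸ I) _ h
    exact (Ideal.Quotient.eq_zero_iff_mem).mp this
  intro A _ a b hab
  apply le_antisymm
  · rw [Ideal.span_le, Set.singleton_subset_iff]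
    exact key A a b hab
  · rw [Ideal.span_le, Set.singleton_subset_iff]
    exact key A b a ((hEquiv A).symm hab)
end

section
/- Let {R_A} be a zero-divisor functorial family and let A, B be commutative rings. Then the map φ from the set of R_{A×B}-classes of A×B to the product of the set of R_A-classes of A with the set of R_B-classes of B, given by [(a,b)] ↦ ([a],[b]), is well defined and surjective, and it is a strong graph morphism between the associated zero-divisor graphs: for all (a,b), (a',b') ∈ A×B, the classes [(a,b)] and [(a',b')] are adjacent in ζ(A×B) (i.e., (a,b)(a',b') = 0) if and only if [a], [a'] are adjacent in ζ(A) (i.e., aa' = 0) and [b], [b'] are adjacent in ζ(B) (i.e., bb' = 0). -/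
universe u

/-- The setoid on a commutative ring `A` attached to a family of equivalence
relations indexed by all commutative rings. -/
def famSetoid (R : ∀ (A : Type u) [CommRing A], A → A → Prop)
    (hEquiv : ∀ (A : Type u) [CommRing A], Equivalence (R A))
    (A : Type u) [CommRing A] : Setoid A :=
  ⟨R A, hEquiv A⟩

/-- Let `{R_A}` be a zero-divisor functorial family and `A`, `B`
commutative rings.  Then the map `φ : (A × B)/R_{A×B} → A/R_A × B/R_B`,
`[(a,b)] ↦ ([a],[b])`, is well defined and surjective, and it is a strong graph
morphism of the associated zero-divisor graphs: `[(a,b)]` and `[(a',b')]` are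
adjacent in `ζ(A × B)` iff `[a],[a']` are adjacent in `ζ(A)` and `[b],[b']` are
adjacent in `ζ(B)`. -/
theorem zeta_prod_strong_epi
    (R : ∀ (A : Type u) [CommRing A], A → A → Prop)
    (hEquiv : ∀ (A : Type u) [CommRing A], Equivalence (R A))
    (hFunc : ∀ (A B : Type u) [CommRing A] [CommRing B] (f : A →+* B) (a a' : A),
      R A a a' → R B (f a) (f a'))
    (hzd : ∀ (A : Type u) [CommRing A] (a a' b b' : A),
      R A a a' → R A b b' → a * b = 0 → a' * b' = 0)
    (A B : Type u) [CommRing A] [CommRing B] :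
    ∃ φ : Quotient (famSetoid R hEquiv (A × B)) →
        Quotient (famSetoid R hEquiv A) × Quotient (famSetoid R hEquiv B),
      (∀ (a : A) (b : B),
        φ (Quotient.mk (famSetoid R hEquiv (A × B)) (a, b)) =
          (Quotient.mk (famSetoid R hEquiv A) a, Quotient.mk (famSetoid R hEquiv B) b)) ∧
      Function.Surjective φ ∧
      (∀ (a a' : A) (b b' : B),
        ((a, b) : A × B) * (a', b') = 0 ↔ a * a' = 0 ∧ b * b' = 0) := by
  refine ⟨Quotient.lift
      (fun p : A × B => (Quotient.mk (famSetoid R hEquiv A) p.1,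
        Quotient.mk (famSetoid R hEquiv B) p.2)) ?_, ?_, ?_, ?_⟩
  · intro p q h
    have h1 := hFunc (A × B) A (RingHom.fst A B) p q h
    have h2 := hFunc (A × B) B (RingHom.snd A B) p q h
    exact Prod.ext (Quotient.sound h1) (Quotient.sound h2)
  · intro a b; rfl
  · rintro ⟨qa, qb⟩
    obtain ⟨a, rfl⟩ := Quotient.exists_rep qa
    obtain ⟨b, rfl⟩ := Quotient.exists_rep qb
    exact ⟨Quotient.mk _ (a, b), rfl⟩
  · intro a a' b b'
    constructor
    · intro h
      exact ⟨congrArg Prod.fst h, congrArg Prod.snd h⟩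
    · rintro ⟨h1, h2⟩
      exact Prod.ext h1 h2
end

section
/- Let A and B be commutative rings. For all a, a' ∈ A and b, b' ∈ B, the principal ideals of A×B generated by (a,b) and by (a',b') are equal if and only if (a) = (a') in A and (b) = (b') in B. Consequently, the map sending the principal ideal generated by (a,b) to the pair ((a),(b)) is a well-defined bijection from the set of principal ideals of A×B onto the product of the set of principal ideals of A with the set of principal ideals of B, and for all a, a' ∈ A, b, b' ∈ B one has (a,b)·(a',b') = 0 in A×B if and only if aa' = 0 in A and bb' = 0 in B; that is, ζ(A×B, ∼) ≅ ζ(A, ∼) × ζ(B, ∼). -/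
private lemma prod_dvd_iff' {A B : Type*} [CommRing A] [CommRing B]
    (a x : A) (b y : B) : ((a, b) : A × B) ∣ (x, y) ↔ a ∣ x ∧ b ∣ y := by
  constructor
  · rintro ⟨⟨c, d⟩, h⟩
    exact ⟨⟨c, congrArg Prod.fst h⟩, ⟨d, congrArg Prod.snd h⟩⟩
  · rintro ⟨⟨c, hc⟩, ⟨d, hd⟩⟩
    exact ⟨(c, d), Prod.ext hc hd⟩

private lemma span_pair_eq {A B : Type*} [CommRing A] [CommRing B] (a : A) (b : B) :
    Ideal.span {((a, b) : A × B)} = Ideal.prod (Ideal.span {a}) (Ideal.span {b}) := by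
  ext ⟨x, y⟩
  simp [Ideal.mem_prod, Ideal.mem_span_singleton, prod_dvd_iff']

private lemma map_fst_span {A B : Type*} [CommRing A] [CommRing B] (a : A) (b : B) :
    Ideal.map (RingHom.fst A B) (Ideal.span {((a, b) : A × B)}) = Ideal.span {a} := by
  rw [Ideal.map_span, Set.image_singleton]; rfl

private lemma map_snd_span {A B : Type*} [CommRing A] [CommRing B] (a : A) (b : B) :
    Ideal.map (RingHom.snd A B) (Ideal.span {((a, b) : A × B)}) = Ideal.span {b} := by
  rw [Ideal.map_span, Set.image_singleton]; rfl

/-- For commutative rings `A`, `B`: `((a,b)) = ((a',b'))` in `A × B`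
iff `(a) = (a')` and `(b) = (b')`; consequently `(a,b) ↦ ((a),(b))` induces a
bijection between the principal ideals of `A × B` and pairs of principal ideals
of `A` and `B`, and `(a,b)·(a',b') = 0` iff `a·a' = 0` and `b·b' = 0`; that is,
`ζ(A × B, ∼) ≅ ζ(A, ∼) × ζ(B, ∼)`. -/
theorem zeta_sim_preserves_binary_products
    {A B : Type*} [CommRing A] [CommRing B] :
    (∀ (a a' : A) (b b' : B),
      Ideal.span {((a, b) : A × B)} = Ideal.span {((a', b') : A × B)} ↔
        (Ideal.span {a} = Ideal.span {a'} ∧ Ideal.span {b} = Ideal.span {b'})) ∧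
    ∃ e : {I : Ideal (A × B) // I.IsPrincipal} ≃
        {I : Ideal A // I.IsPrincipal} × {I : Ideal B // I.IsPrincipal},
      (∀ (a : A) (b : B),
        e ⟨Ideal.span {((a, b) : A × B)}, ⟨(a, b), rfl⟩⟩ =
          (⟨Ideal.span {a}, ⟨a, rfl⟩⟩, ⟨Ideal.span {b}, ⟨b, rfl⟩⟩)) ∧
      (∀ (I J : {I : Ideal (A × B) // I.IsPrincipal}),
        I.1 * J.1 = ⊥ ↔ ((e I).1.1 * (e J).1.1 = ⊥ ∧ (e I).2.1 * (e J).2.1 = ⊥)) := by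
  have key : ∀ (I : {I : Ideal (A × B) // I.IsPrincipal}),
      ∃ (a : A) (b : B), I.1 = Ideal.span {((a, b) : A × B)} := by
    rintro ⟨I, ⟨⟨a, b⟩, h⟩⟩
    exact ⟨a, b, h⟩
  refine ⟨fun a a' b b' => ?_, ?_⟩
  · rw [span_pair_eq, span_pair_eq, Ideal.prod_inj]
  · refine ⟨{
      toFun := fun I =>
        (⟨Ideal.map (RingHom.fst A B) I.1, by
            obtain ⟨a, b, h⟩ := key I
            exact ⟨a, by rw [h, map_fst_span]⟩⟩,
         ⟨Ideal.map (RingHom.snd A B) I.1, by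
            obtain ⟨a, b, h⟩ := key I
            exact ⟨b, by rw [h, map_snd_span]⟩⟩)
      invFun := fun P =>
        ⟨Ideal.prod P.1.1 P.2.1, by
          obtain ⟨a, ha⟩ := P.1.2
          obtain ⟨b, hb⟩ := P.2.2
          exact ⟨(a, b), by rw [ha, hb]; exact (span_pair_eq a b).symm⟩⟩
      left_inv := fun I => by
        obtain ⟨a, b, h⟩ := key I
        apply Subtype.ext
        simp only [h, map_fst_span, map_snd_span, ← span_pair_eq]
      right_inv := fun P => by
        obtain ⟨a, ha⟩ := P.1.2
        obtain ⟨b, hb⟩ := P.2.2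
        have h : Ideal.prod P.1.1 P.2.1 = Ideal.span {((a, b) : A × B)} := by
          rw [ha, hb]; exact (span_pair_eq a b).symm
        refine Prod.ext (Subtype.ext ?_) (Subtype.ext ?_)
        · show Ideal.map (RingHom.fst A B) (Ideal.prod P.1.1 P.2.1) = P.1.1
          rw [h, map_fst_span, ha]
        · show Ideal.map (RingHom.snd A B) (Ideal.prod P.1.1 P.2.1) = P.2.1
          rw [h, map_snd_span, hb] }, ?_, ?_⟩
    · intro a b
      refine Prod.ext (Subtype.ext ?_) (Subtype.ext ?_)
      · exact map_fst_span a b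
      · exact map_snd_span a b
    · intro I J
      obtain ⟨a, b, hI⟩ := key I
      obtain ⟨a', b', hJ⟩ := key J
      simp only [Equiv.coe_fn_mk, hI, hJ, map_fst_span, map_snd_span,
        Ideal.span_singleton_mul_span_singleton, Ideal.span_singleton_eq_bot,
        Prod.mk_mul_mk, Prod.mk_eq_zero]
end

section
/- Let {R_A} be a zero-divisor functorial family with the following property: for every pair of ring homomorphisms f, g : A → B and every a ∈ A with f(a) R_B g(a), there exists a' ∈ A such that f(a') = g(a') and a R_A a'. Then R_A is the equality relation for every commutative ring A. -/
universe u

open Polynomial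

/-- Cancellation of multiplication by `X ^ k` in a polynomial ring. -/
lemma aux_X_pow_mul_cancel {A : Type*} [CommRing A] {k : ℕ} {f g : Polynomial A}
    (h : Polynomial.X ^ k * f = Polynomial.X ^ k * g) : f = g := by
  ext n
  have := congrArg (fun p => Polynomial.coeff p (n + k)) h
  simpa [Polynomial.coeff_X_pow_mul] using this

/-- Divisibility of a composition difference. -/
lemma aux_dvd_comp_sub {A : Type*} [CommRing A] (w p : Polynomial A) :
    (p - Polynomial.X) ∣ (w.comp p - w) := by
  have e1 : w.comp p = (w.map Polynomial.C).eval p := by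
    rw [Polynomial.comp, Polynomial.eval₂_eq_eval_map]
  have e2 : w.comp Polynomial.X = (w.map Polynomial.C).eval Polynomial.X := by
    rw [Polynomial.comp, Polynomial.eval₂_eq_eval_map]
  have h := Polynomial.sub_dvd_eval_sub p Polynomial.X (w.map Polynomial.C)
  rw [← e1, ← e2, Polynomial.comp_X] at h
  exact h

/-- Let `{R_A}` be a zero-divisor functorial family such that for all
ring homomorphisms `f, g : A → B` and every `a ∈ A` with `f(a) R_B g(a)` there is
`a' ∈ A` with `f(a') = g(a')` and `a R_A a'` (i.e. the associated zero-divisor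
functor preserves equalizers).  Then `R_A` is the equality relation on every
commutative ring `A`. -/
theorem preserves_equalizers_implies_equality
    (R : ∀ (A : Type u) [CommRing A], A → A → Prop)
    (hEquiv : ∀ (A : Type u) [CommRing A], Equivalence (R A))
    (hFunc : ∀ (A B : Type u) [CommRing A] [CommRing B] (f : A →+* B) (a a' : A),
      R A a a' → R B (f a) (f a'))
    (hzd : ∀ (A : Type u) [CommRing A] (a a' b b' : A),
      R A a a' → R A b b' → a * b = 0 → a' * b' = 0)
    (hEq : ∀ (A B : Type u) [CommRing A] [CommRing B] (f g : A →+* B) (a : A),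
      R B (f a) (g a) → ∃ a' : A, f a' = g a' ∧ R A a a') :
    ∀ (A : Type u) [CommRing A] (a b : A), R A a b → a = b := by
  intro A _ a b hab
  -- A general fact: if `X R s` in `A[X]`, then `s(0) = 0`, so `X ∣ s`.
  have key0 : ∀ s : Polynomial A, R (Polynomial A) Polynomial.X s → Polynomial.X ∣ s := by
    intro s hs
    have h1 := hFunc _ _ (Polynomial.evalRingHom (0 : A)) _ _ hs
    simp only [Polynomial.coe_evalRingHom, Polynomial.eval_X] at h1
    have h2 := hzd A 0 (s.eval 0) 1 1 h1 ((hEquiv A).refl 1) (by ring)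
    rw [mul_one] at h2
    rw [Polynomial.X_dvd_iff, Polynomial.coeff_zero_eq_eval_zero]
    exact h2
  -- A general fact: if `X R s` in `A[X]`, then `s ∣ X`.
  have key1 : ∀ s : Polynomial A, R (Polynomial A) Polynomial.X s → s ∣ Polynomial.X := by
    intro s hs
    set I := Ideal.span ({s} : Set (Polynomial A)) with hI
    have hmk := hFunc _ _ (Ideal.Quotient.mk I) _ _ hs
    have hs0 : Ideal.Quotient.mk I s = 0 :=
      Ideal.Quotient.eq_zero_iff_mem.2 (Ideal.subset_span rfl)
    have h3 := hzd _ (Ideal.Quotient.mk I s) (Ideal.Quotient.mk I Polynomial.X) 1 1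
      ((hEquiv _).symm hmk) ((hEquiv _).refl 1) (by rw [hs0, zero_mul])
    rw [mul_one] at h3
    exact Ideal.mem_span_singleton.1 (Ideal.Quotient.eq_zero_iff_mem.1 h3)
  -- Step 1: get `p` with `p(a) = p(b)` and `X R p`.
  obtain ⟨p, hpeq, hXp⟩ := hEq (Polynomial A) A (Polynomial.evalRingHom a)
    (Polynomial.evalRingHom b) Polynomial.X (by simpa using hab)
  simp only [Polynomial.coe_evalRingHom, Polynomial.eval_X] at hpeq
  -- `p = X * r`
  obtain ⟨r, hr⟩ := key0 p hXp
  -- Step 2: get `q` with `q = q.comp p` and `X R q`.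
  obtain ⟨q, hqeq, hXq⟩ := hEq (Polynomial A) (Polynomial A) (RingHom.id _)
    ((Polynomial.aeval p).toRingHom) Polynomial.X
    (by simpa using hXp)
  simp only [RingHom.id_apply, AlgHom.toRingHom_eq_coe, RingHom.coe_coe] at hqeq
  have hqcomp : q = q.comp p := by
    conv_lhs => rw [hqeq]
    rw [Polynomial.comp, Polynomial.aeval_def, Polynomial.algebraMap_eq]
  -- `q = X * w`
  obtain ⟨w, hw⟩ := key0 q hXq
  -- `q ∣ X`, hence `w(0)` is a unit.
  obtain ⟨s, hsX⟩ := key1 q hXq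
  have hw0unit : w.coeff 0 * s.coeff 0 = 1 := by
    have h5 := congrArg (fun f => Polynomial.coeff f 1) hsX
    rw [Polynomial.coeff_X_one, hw, mul_assoc] at h5
    have h4 : (Polynomial.X * (w * s)).coeff 1 = (w * s).coeff 0 := by
      rw [← pow_one (Polynomial.X : Polynomial A)]
      exact Polynomial.coeff_X_pow_mul (w * s) 1 0
    rw [h4, Polynomial.mul_coeff_zero] at h5
    exact h5.symm
  -- Functional equation: `w = r * w.comp p`.
  have hfun : w = r * w.comp p := by
    apply aux_X_pow_mul_cancel (k := 1)
    simp only [pow_one]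
    calc Polynomial.X * w = q := hw.symm
    _ = q.comp p := hqcomp
    _ = (Polynomial.X * w).comp p := by rw [hw]
    _ = p * w.comp p := by rw [Polynomial.mul_comp, Polynomial.X_comp]
    _ = Polynomial.X * (r * w.comp p) := by rw [hr]; ring
  -- Induction: `X ^ k ∣ r - 1` for all `k`.
  have hind : ∀ k : ℕ, (Polynomial.X : Polynomial A) ^ k ∣ (r - 1) := by
    intro k
    induction k with
    | zero => simp
    | succ k ih =>
      obtain ⟨u, hu⟩ := ih
      -- `p - X = X ^ (k+1) * u`
      have hpX : p - Polynomial.X = Polynomial.X ^ (k + 1) * u := by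
        rw [hr]; linear_combination Polynomial.X * hu
      obtain ⟨v, hv⟩ := aux_dvd_comp_sub w p
      rw [hpX] at hv
      -- from `w = r * w.comp p` deduce `X ∣ u * w * something`
      have hkey : Polynomial.X ^ k * (-(u * w)) =
          Polynomial.X ^ k * (Polynomial.X * (r * (u * v))) := by
        have h5 : w - r * w = r * (w.comp p - w) := by
          linear_combination hfun
        rw [hv] at h5
        have h6 : (1 - r) * w = Polynomial.X ^ (k+1) * (r * (u * v)) := by
          linear_combination h5
        calc Polynomial.X ^ k * (-(u * w)) = -((Polynomial.X ^ k * u) * w) := by ring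
        _ = -((r - 1) * w) := by rw [← hu]
        _ = (1 - r) * w := by ring
        _ = Polynomial.X ^ (k+1) * (r * (u * v)) := h6
        _ = Polynomial.X ^ k * (Polynomial.X * (r * (u * v))) := by ring
      have h7 := aux_X_pow_mul_cancel hkey
      -- coefficient 0: `u.coeff 0 * w.coeff 0 = 0`
      have h8 : u.coeff 0 * w.coeff 0 = 0 := by
        have h9 := congrArg (fun f => Polynomial.coeff f 0) h7
        simp only [Polynomial.coeff_neg, Polynomial.mul_coeff_zero,
          Polynomial.coeff_X, if_neg one_ne_zero, zero_mul, neg_eq_zero] at h9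
        exact h9
      have hu0 : u.coeff 0 = 0 := by
        calc u.coeff 0 = u.coeff 0 * (w.coeff 0 * s.coeff 0) := by rw [hw0unit, mul_one]
        _ = (u.coeff 0 * w.coeff 0) * s.coeff 0 := by ring
        _ = 0 := by rw [h8, zero_mul]
      obtain ⟨u', hu'⟩ := Polynomial.X_dvd_iff.2 hu0
      exact ⟨u', by rw [hu, hu']; ring⟩
  -- Conclude `r = 1`, so `p = X`, so `a = b`.
  have hr1 : r = 1 := by
    have hS : r - 1 = 0 := by
      ext n
      obtain ⟨u, hu⟩ := hind (n + 1)
      rw [hu, mul_comm, Polynomial.coeff_mul_X_pow']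
      simp
    exact sub_eq_zero.1 hS
  have hpX2 : p = Polynomial.X := by rw [hr, hr1, mul_one]
  rw [hpX2] at hpeq
  simpa using hpeq
end

section
/- Let A, B₁, B₂ be commutative rings with B₁ and B₂ nontrivial (i.e., 0 ≠ 1). Suppose there is a bijection e from the set of principal ideals of A onto the product of the set of principal ideals of B₁ with the set of principal ideals of B₂ such that, for all principal ideals I, J of A, one has I·J = (0) if and only if both components of e(I) and e(J) have zero product (i.e., e is an isomorphism of graphs ζ(A,∼) ≅ ζ(B₁,∼) × ζ(B₂,∼)). Then there exist a₁, a₂ ∈ A, both nonzero zero-divisors, such that a₁a₂ = 0 and Ann(a₁) ∩ Ann(a₂) = 0. -/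
/-- Let `A`, `B₁`, `B₂` be commutative rings with `B₁`, `B₂`
nontrivial, and suppose there is a graph isomorphism
`ζ(A,∼) ≅ ζ(B₁,∼) × ζ(B₂,∼)`, i.e. a bijection `e` between the principal ideals
of `A` and pairs of principal ideals of `B₁` and `B₂` preserving, in both
directions, the adjacency "the product of the two ideals is zero".  Then there
exist nonzero zero-divisors `a₁, a₂ ∈ A` with `a₁a₂ = 0` and
`Ann(a₁) ∩ Ann(a₂) = 0`. -/
theorem exists_orthogonal_of_zeta_prod_iso
    {A B₁ B₂ : Type*} [CommRing A] [CommRing B₁] [CommRing B₂]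
    [Nontrivial B₁] [Nontrivial B₂]
    (e : {I : Ideal A // I.IsPrincipal} ≃
        {I : Ideal B₁ // I.IsPrincipal} × {I : Ideal B₂ // I.IsPrincipal})
    (he : ∀ I J : {I : Ideal A // I.IsPrincipal},
      I.1 * J.1 = ⊥ ↔ ((e I).1.1 * (e J).1.1 = ⊥ ∧ (e I).2.1 * (e J).2.1 = ⊥)) :
    ∃ a₁ a₂ : A, a₁ ≠ 0 ∧ a₂ ≠ 0 ∧
      (∃ b : A, b ≠ 0 ∧ a₁ * b = 0) ∧ (∃ b : A, b ≠ 0 ∧ a₂ * b = 0) ∧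
      a₁ * a₂ = 0 ∧ (∀ x : A, x * a₁ = 0 → x * a₂ = 0 → x = 0) := by
  classical
  -- named principal ideals
  let botA : {I : Ideal A // I.IsPrincipal} := ⟨⊥, ⟨0, by rw [Ideal.submodule_span_eq]; exact (Ideal.span_singleton_eq_bot.mpr rfl).symm⟩⟩
  let top1 : {I : Ideal B₁ // I.IsPrincipal} := ⟨⊤, ⟨1, by simp [Ideal.span_singleton_one]⟩⟩
  let top2 : {I : Ideal B₂ // I.IsPrincipal} := ⟨⊤, ⟨1, by simp [Ideal.span_singleton_one]⟩⟩
  let bot1 : {I : Ideal B₁ // I.IsPrincipal} := ⟨⊥, ⟨0, by rw [Ideal.submodule_span_eq]; exact (Ideal.span_singleton_eq_bot.mpr rfl).symm⟩⟩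
  let bot2 : {I : Ideal B₂ // I.IsPrincipal} := ⟨⊥, ⟨0, by rw [Ideal.submodule_span_eq]; exact (Ideal.span_singleton_eq_bot.mpr rfl).symm⟩⟩
  -- e sends ⊥ to (⊥, ⊥)
  have hbot : e botA = (bot1, bot2) := by
    have h := (he botA (e.symm (top1, top2))).mp (by simp [botA])
    rw [e.apply_symm_apply] at h
    simp only [top1, top2, Ideal.mul_top] at h
    have h1 : (e botA).1 = bot1 := Subtype.ext h.1
    have h2 : (e botA).2 = bot2 := Subtype.ext h.2
    exact Prod.ext h1 h2
  set I₁ := e.symm (top1, bot2) with hI₁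
  set I₂ := e.symm (bot1, top2) with hI₂
  have heI₁ : e I₁ = (top1, bot2) := e.apply_symm_apply _
  have heI₂ : e I₂ = (bot1, top2) := e.apply_symm_apply _
  -- product of the two ideals is zero
  have hprod : I₁.1 * I₂.1 = ⊥ := by
    rw [he I₁ I₂, heI₁, heI₂]
    constructor <;> simp [top1, top2, bot1, bot2]
  -- I₁ ≠ ⊥
  have hne1 : I₁.1 ≠ ⊥ := by
    intro h
    have : I₁ = botA := Subtype.ext h
    rw [this, hbot] at heI₁
    have : (⊥ : Ideal B₁) = ⊤ := congrArg (fun p => p.1.1) heI₁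
    exact absurd this bot_ne_top
  have hne2 : I₂.1 ≠ ⊥ := by
    intro h
    have : I₂ = botA := Subtype.ext h
    rw [this, hbot] at heI₂
    have : (⊥ : Ideal B₂) = ⊤ := congrArg (fun p => p.2.1) heI₂
    exact absurd this bot_ne_top
  obtain ⟨a₁, ha₁⟩ := I₁.2
  obtain ⟨a₂, ha₂⟩ := I₂.2
  rw [Ideal.submodule_span_eq] at ha₁ ha₂
  have ha₁ne : a₁ ≠ 0 := by
    intro h; apply hne1; rw [ha₁, h]; simp
  have ha₂ne : a₂ ≠ 0 := by
    intro h; apply hne2; rw [ha₂, h]; simp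
  have hmul : a₁ * a₂ = 0 := by
    have : Ideal.span {a₁} * Ideal.span {a₂} = ⊥ := by
      rw [← ha₁, ← ha₂]; exact hprod
    rw [Ideal.span_singleton_mul_span_singleton, Ideal.span_singleton_eq_bot] at this
    exact this
  refine ⟨a₁, a₂, ha₁ne, ha₂ne, ⟨a₂, ha₂ne, hmul⟩,
    ⟨a₁, ha₁ne, by rw [mul_comm]; exact hmul⟩, hmul, ?_⟩
  intro x hx1 hx2
  set X : {I : Ideal A // I.IsPrincipal} := ⟨Ideal.span {x}, ⟨x, rfl⟩⟩ with hX
  have hXI₁ : X.1 * I₁.1 = ⊥ := by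
    rw [hX, ha₁]
    simp [Ideal.span_singleton_mul_span_singleton, Ideal.span_singleton_eq_bot, hx1]
  have hXI₂ : X.1 * I₂.1 = ⊥ := by
    rw [hX, ha₂]
    simp [Ideal.span_singleton_mul_span_singleton, Ideal.span_singleton_eq_bot, hx2]
  have h1 := (he X I₁).mp hXI₁
  have h2 := (he X I₂).mp hXI₂
  rw [heI₁] at h1
  rw [heI₂] at h2
  simp only [top1, top2, Ideal.mul_top] at h1 h2
  have hEX : e X = (bot1, bot2) := Prod.ext (Subtype.ext h1.1) (Subtype.ext h2.2)
  have : X = botA := by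
    have := congrArg e.symm (hEX.trans hbot.symm)
    simpa using this
  have hx : Ideal.span {x} = (⊥ : Ideal A) := congrArg Subtype.val this
  rwa [Ideal.span_singleton_eq_bot] at hx
end

section
/- Let A be a total commutative ring (every non-zero-divisor of A is a unit) and let B₁, B₂ be nontrivial commutative rings. Suppose there is a bijection e from the set of principal ideals of A onto the product of the set of principal ideals of B₁ with the set of principal ideals of B₂ such that, for all principal ideals I, J of A, one has I·J = (0) if and only if both components of e(I) and e(J) have zero product. Then there exist ideals I₁, I₂ of A with I₁ ∩ I₂ = 0 and I₁ + I₂ = A (hence A ≅ A/I₁ × A/I₂ as rings), and there exist bijections from the set of principal ideals of A/I₁ onto that of B₁, and from the set of principal ideals of A/I₂ onto that of B₂, each preserving in both directions the property that the product of two principal ideals is zero. -/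
private lemma map_isPrincipal_aux {R S : Type*} [CommRing R] [CommRing S] (f : R →+* S)
    {I : Ideal R} (h : I.IsPrincipal) : (I.map f).IsPrincipal := by
  obtain ⟨x, hx⟩ := h.principal
  refine ⟨⟨f x, ?_⟩⟩
  rw [hx]
  show Ideal.map f (Ideal.span {x}) = Ideal.span {f x}
  rw [Ideal.map_span, Set.image_singleton]

/-- Auxiliary lemma: one side of the decomposition. -/
private lemma side_equiv_aux {A B C : Type*} [CommRing A] [CommRing B] [CommRing C]
    (e : {I : Ideal A // I.IsPrincipal} ≃
        {I : Ideal B // I.IsPrincipal} × {I : Ideal C // I.IsPrincipal})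
    (he : ∀ I J : {I : Ideal A // I.IsPrincipal},
      I.1 * J.1 = ⊥ ↔ ((e I).1.1 * (e J).1.1 = ⊥ ∧ (e I).2.1 * (e J).2.1 = ⊥))
    (a b c : A) (hab : a * b = 0) (hc : c * (a + b) = 1)
    (hK2 : ∀ x : A, a * x = 0 ↔ (e ⟨Ideal.span {x}, ⟨⟨x, rfl⟩⟩⟩).2.1 = ⊥) :
    ∃ e₁ : {I : Ideal (A ⧸ Ideal.span {a}) // I.IsPrincipal} ≃ {I : Ideal B // I.IsPrincipal},
      ∀ I J : {I : Ideal (A ⧸ Ideal.span {a}) // I.IsPrincipal},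
        I.1 * J.1 = ⊥ ↔ (e₁ I).1 * (e₁ J).1 = ⊥ := by
  set π : A →+* A ⧸ Ideal.span {a} := Ideal.Quotient.mk (Ideal.span {a}) with hπ
  have hker : RingHom.ker π = Ideal.span {a} := Ideal.mk_ker
  -- x in both span a and span b is zero
  have hinf : ∀ x : A, x ∈ Ideal.span {a} → x ∈ Ideal.span {b} → x = 0 := by
    intro x hxa hxb
    obtain ⟨s, hx1⟩ := Ideal.mem_span_singleton.mp hxa
    obtain ⟨t, hx2⟩ := Ideal.mem_span_singleton.mp hxb
    linear_combination -x * hc + c * b * hx1 + c * a * hx2 + c * (s + t) * hab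
  -- if a * x = 0 then x ∈ span b
  have hsub : ∀ x : A, a * x = 0 → x ∈ Ideal.span {b} := by
    intro x hx
    exact Ideal.mem_span_singleton.mpr ⟨c * x, by linear_combination -x * hc + c * hx⟩
  -- the forward map
  let g : {I : Ideal B // I.IsPrincipal} → {I : Ideal (A ⧸ Ideal.span {a}) // I.IsPrincipal} :=
    fun P => ⟨Ideal.map π (e.symm (P, ⟨⊥, bot_isPrincipal⟩)).1,
      map_isPrincipal_aux π (e.symm (P, ⟨⊥, bot_isPrincipal⟩)).2⟩
  -- ideals e.symm (P, ⊥) are contained in span b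
  have hZb : ∀ P : {I : Ideal B // I.IsPrincipal},
      (e.symm (P, ⟨⊥, bot_isPrincipal⟩)).1 ≤ Ideal.span {b} := by
    intro P
    obtain ⟨z, hz⟩ := (e.symm (P, ⟨⊥, bot_isPrincipal⟩)).2.principal
    have hZ : (⟨Ideal.span {z}, ⟨⟨z, rfl⟩⟩⟩ : {I : Ideal A // I.IsPrincipal})
        = e.symm (P, ⟨⊥, bot_isPrincipal⟩) := Subtype.ext hz.symm
    have h2 : (e ⟨Ideal.span {z}, ⟨⟨z, rfl⟩⟩⟩).2.1 = ⊥ := by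
      rw [hZ, Equiv.apply_symm_apply]
    have haz : a * z = 0 := (hK2 z).mpr h2
    rw [hz]
    exact (Submodule.span_singleton_le_iff_mem z _).mpr (hsub z haz)
  -- key property
  have key : ∀ P Q : {I : Ideal B // I.IsPrincipal},
      (g P).1 * (g Q).1 = ⊥ ↔ P.1 * Q.1 = ⊥ := by
    intro P Q
    set Z := e.symm (P, ⟨⊥, bot_isPrincipal⟩) with hZdef
    set W := e.symm (Q, ⟨⊥, bot_isPrincipal⟩) with hWdef
    have h1 : (g P).1 * (g Q).1 = Ideal.map π (Z.1 * W.1) := (Ideal.map_mul π _ _).symm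
    have h2 : Ideal.map π (Z.1 * W.1) = ⊥ ↔ Z.1 * W.1 = ⊥ := by
      rw [Ideal.map_eq_bot_iff_le_ker, hker]
      constructor
      · intro hle
        rw [eq_bot_iff]
        intro x hx
        have hxb : x ∈ Ideal.span {b} := Ideal.mul_le_left (I := Z.1) (J := W.1)
          |>.trans (hZb P) hx
        exact (Submodule.mem_bot A).mpr (hinf x (hle hx) hxb)
      · intro hbot
        rw [hbot]
        exact bot_le
    have h3 : Z.1 * W.1 = ⊥ ↔ P.1 * Q.1 = ⊥ := by
      rw [he Z W, hZdef, hWdef, Equiv.apply_symm_apply, Equiv.apply_symm_apply]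
      simp
    rw [h1, h2, h3]
  -- injectivity
  have ginj : Function.Injective g := by
    intro P Q h
    have hmap : Ideal.map π (e.symm (P, ⟨⊥, bot_isPrincipal⟩)).1
        = Ideal.map π (e.symm (Q, ⟨⊥, bot_isPrincipal⟩)).1 := congrArg Subtype.val h
    have aux : ∀ P Q : {I : Ideal B // I.IsPrincipal},
        Ideal.map π (e.symm (P, ⟨⊥, bot_isPrincipal⟩)).1
          ≤ Ideal.map π (e.symm (Q, ⟨⊥, bot_isPrincipal⟩)).1 →
        (e.symm (P, ⟨⊥, bot_isPrincipal⟩)).1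
          ≤ (e.symm (Q, ⟨⊥, bot_isPrincipal⟩)).1 := by
      intro P Q hle z hzZ
      have hπz : π z ∈ Ideal.map π (e.symm (Q, ⟨⊥, bot_isPrincipal⟩)).1 :=
        hle (Ideal.mem_map_of_mem π hzZ)
      obtain ⟨w, hwW, hw⟩ := Ideal.mem_map_iff_of_surjective π
        Ideal.Quotient.mk_surjective |>.mp hπz
      have hsub1 : w - z ∈ Ideal.span {a} := by
        rw [← hker]
        simp [RingHom.mem_ker, map_sub, hw]
      have hsub2 : w - z ∈ Ideal.span {b} :=
        sub_mem (hZb Q hwW) (hZb P hzZ)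
      have : w - z = 0 := hinf _ hsub1 hsub2
      rwa [← sub_eq_zero.mp this]
    have hZW : (e.symm (P, ⟨⊥, bot_isPrincipal⟩))
        = (e.symm (Q, ⟨⊥, bot_isPrincipal⟩)) :=
      Subtype.ext (le_antisymm (aux P Q (le_of_eq hmap)) (aux Q P (le_of_eq hmap.symm)))
    have := e.symm.injective hZW
    exact Subtype.ext (congrArg (fun p => p.1.1) this)
  -- surjectivity
  have gsurj : Function.Surjective g := by
    intro K
    obtain ⟨ybar, hK⟩ := K.2.principal
    obtain ⟨y, hy⟩ := Ideal.Quotient.mk_surjective ybar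
    set z := b * (c * y) with hzdef
    have haz : a * z = 0 := by linear_combination c * y * hab
    set X : {I : Ideal A // I.IsPrincipal} := ⟨Ideal.span {z}, ⟨⟨z, rfl⟩⟩⟩ with hXdef
    have h2 : (e X).2.1 = ⊥ := (hK2 z).mp haz
    refine ⟨(e X).1, ?_⟩
    have hpair : ((e X).1, (⟨⊥, bot_isPrincipal⟩ :
        {I : Ideal C // I.IsPrincipal})) = e X := by
      refine Prod.ext rfl ?_
      exact (Subtype.ext h2).symm
    have hXeq : e.symm ((e X).1, (⟨⊥, bot_isPrincipal⟩ :
        {I : Ideal C // I.IsPrincipal})) = X := by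
      rw [hpair, Equiv.symm_apply_apply]
    refine Subtype.ext ?_
    show Ideal.map π (e.symm ((e X).1, ⟨⊥, bot_isPrincipal⟩)).1 = K.1
    rw [hXeq]
    show Ideal.map π (Ideal.span {z}) = K.1
    have hπz : π z = ybar := by
      rw [← hy]
      refine Ideal.Quotient.eq.mpr ?_
      exact Ideal.mem_span_singleton.mpr ⟨-(c * y), by linear_combination y * hc⟩
    rw [Ideal.map_span, Set.image_singleton, hπz, hK]
  -- assemble
  refine ⟨(Equiv.ofBijective g ⟨ginj, gsurj⟩).symm, ?_⟩
  intro I J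
  have hI : g ((Equiv.ofBijective g ⟨ginj, gsurj⟩).symm I) = I :=
    (Equiv.ofBijective g ⟨ginj, gsurj⟩).apply_symm_apply I
  have hJ : g ((Equiv.ofBijective g ⟨ginj, gsurj⟩).symm J) = J :=
    (Equiv.ofBijective g ⟨ginj, gsurj⟩).apply_symm_apply J
  have := key ((Equiv.ofBijective g ⟨ginj, gsurj⟩).symm I)
    ((Equiv.ofBijective g ⟨ginj, gsurj⟩).symm J)
  rw [hI, hJ] at this
  exact this

/-- Inversion of Product: Let `A` be a total commutative ring
(every non-zero-divisor is a unit) and `B₁`, `B₂` nontrivial commutative rings.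
If there is a graph isomorphism `ζ(A,∼) ≅ ζ(B₁,∼) × ζ(B₂,∼)` (a bijection `e`
between principal ideals of `A` and pairs of principal ideals of `B₁`, `B₂`
preserving zero products in both directions), then `A` decomposes: there are
ideals `I₁, I₂` with `I₁ ∩ I₂ = 0`, `I₁ + I₂ = A` (so `A ≅ A/I₁ × A/I₂`), and
bijections between the principal ideals of `A/I₁` and those of `B₁`, and between
the principal ideals of `A/I₂` and those of `B₂`, each preserving zero products
of principal ideals in both directions. -/
theorem inversion_of_product_total
    {A B₁ B₂ : Type*} [CommRing A] [CommRing B₁] [CommRing B₂]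
    [Nontrivial B₁] [Nontrivial B₂]
    (htotal : ∀ a : A, (∀ x : A, a * x = 0 → x = 0) → IsUnit a)
    (e : {I : Ideal A // I.IsPrincipal} ≃
        {I : Ideal B₁ // I.IsPrincipal} × {I : Ideal B₂ // I.IsPrincipal})
    (he : ∀ I J : {I : Ideal A // I.IsPrincipal},
      I.1 * J.1 = ⊥ ↔ ((e I).1.1 * (e J).1.1 = ⊥ ∧ (e I).2.1 * (e J).2.1 = ⊥)) :
    ∃ I₁ I₂ : Ideal A, I₁ ⊓ I₂ = ⊥ ∧ I₁ ⊔ I₂ = ⊤ ∧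
      Nonempty (A ≃+* (A ⧸ I₁) × (A ⧸ I₂)) ∧
      (∃ e₁ : {I : Ideal (A ⧸ I₁) // I.IsPrincipal} ≃ {I : Ideal B₁ // I.IsPrincipal},
        ∀ I J : {I : Ideal (A ⧸ I₁) // I.IsPrincipal},
          I.1 * J.1 = ⊥ ↔ (e₁ I).1 * (e₁ J).1 = ⊥) ∧
      (∃ e₂ : {I : Ideal (A ⧸ I₂) // I.IsPrincipal} ≃ {I : Ideal B₂ // I.IsPrincipal},
        ∀ I J : {I : Ideal (A ⧸ I₂) // I.IsPrincipal},
          I.1 * J.1 = ⊥ ↔ (e₂ I).1 * (e₂ J).1 = ⊥) := by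
  classical
  -- generators a, b of e⁻¹(⊥,⊤) and e⁻¹(⊤,⊥)
  set Xa : {I : Ideal A // I.IsPrincipal} :=
    e.symm (⟨⊥, bot_isPrincipal⟩, ⟨⊤, top_isPrincipal⟩) with hXa
  set Xb : {I : Ideal A // I.IsPrincipal} :=
    e.symm (⟨⊤, top_isPrincipal⟩, ⟨⊥, bot_isPrincipal⟩) with hXb
  obtain ⟨a, ha⟩ := Xa.2.principal
  obtain ⟨b, hb⟩ := Xb.2.principal
  have hea : e ⟨Ideal.span {a}, ⟨⟨a, rfl⟩⟩⟩
      = (⟨⊥, bot_isPrincipal⟩, ⟨⊤, top_isPrincipal⟩) := by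
    rw [show (⟨Ideal.span {a}, ⟨⟨a, rfl⟩⟩⟩ : {I : Ideal A // I.IsPrincipal}) = Xa from
      Subtype.ext ha.symm, hXa, Equiv.apply_symm_apply]
  have heb : e ⟨Ideal.span {b}, ⟨⟨b, rfl⟩⟩⟩
      = (⟨⊤, top_isPrincipal⟩, ⟨⊥, bot_isPrincipal⟩) := by
    rw [show (⟨Ideal.span {b}, ⟨⟨b, rfl⟩⟩⟩ : {I : Ideal A // I.IsPrincipal}) = Xb from
      Subtype.ext hb.symm, hXb, Equiv.apply_symm_apply]
  -- K2 : a * x = 0 iff second component of e (span x) is ⊥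
  have hK2 : ∀ x : A, a * x = 0 ↔ (e ⟨Ideal.span {x}, ⟨⟨x, rfl⟩⟩⟩).2.1 = ⊥ := by
    intro x
    have h := he ⟨Ideal.span {x}, ⟨⟨x, rfl⟩⟩⟩ ⟨Ideal.span {a}, ⟨⟨a, rfl⟩⟩⟩
    rw [hea] at h
    simp only [Ideal.span_singleton_mul_span_singleton, Ideal.mul_bot, Ideal.mul_top,
      Ideal.span_singleton_eq_bot, eq_self_iff_true, true_and] at h
    rw [mul_comm]
    exact h
  -- K1 : b * x = 0 iff first component of e (span x) is ⊥
  have hK1 : ∀ x : A, b * x = 0 ↔ (e ⟨Ideal.span {x}, ⟨⟨x, rfl⟩⟩⟩).1.1 = ⊥ := by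
    intro x
    have h := he ⟨Ideal.span {x}, ⟨⟨x, rfl⟩⟩⟩ ⟨Ideal.span {b}, ⟨⟨b, rfl⟩⟩⟩
    rw [heb] at h
    simp only [Ideal.span_singleton_mul_span_singleton, Ideal.mul_bot, Ideal.mul_top,
      Ideal.span_singleton_eq_bot, eq_self_iff_true, and_true] at h
    rw [mul_comm]
    exact h
  -- a * b = 0
  have hab : a * b = 0 := by
    have h := he ⟨Ideal.span {a}, ⟨⟨a, rfl⟩⟩⟩ ⟨Ideal.span {b}, ⟨⟨b, rfl⟩⟩⟩
    rw [hea, heb] at h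
    have h0 := h.mpr ⟨by simp, by simp⟩
    rw [Ideal.span_singleton_mul_span_singleton, Ideal.span_singleton_eq_bot] at h0
    exact h0
  -- elements killed by both a and b are zero
  have hzero : ∀ x : A, a * x = 0 → b * x = 0 → x = 0 := by
    intro x hax hbx
    have h1 := (hK2 x).mp hax
    have h2 := (hK1 x).mp hbx
    -- e (span x) = e (⊥)
    have hbot : e ⟨⊥, bot_isPrincipal⟩
        = (⟨⊥, bot_isPrincipal⟩, ⟨⊥, bot_isPrincipal⟩) := by
      have h := he ⟨⊥, bot_isPrincipal⟩
        (e.symm (⟨⊤, top_isPrincipal⟩, ⟨⊤, top_isPrincipal⟩))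
      rw [Equiv.apply_symm_apply] at h
      obtain ⟨ha1, ha2⟩ := h.mp (by simp)
      rw [Ideal.mul_top] at ha1 ha2
      exact Prod.ext (Subtype.ext ha1) (Subtype.ext ha2)
    have : e ⟨Ideal.span {x}, ⟨⟨x, rfl⟩⟩⟩ = e ⟨⊥, bot_isPrincipal⟩ := by
      rw [hbot]
      exact Prod.ext (Subtype.ext h2) (Subtype.ext h1)
    have hx := e.injective this
    have : Ideal.span ({x} : Set A) = ⊥ := congrArg Subtype.val hx
    exact Ideal.span_singleton_eq_bot.mp this
  -- a + b is regular hence a unit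
  have hreg : ∀ x : A, (a + b) * x = 0 → x = 0 := by
    intro x hx
    have hax : a * x = 0 := by
      refine hzero (a * x) ?_ ?_
      · linear_combination a * hx - x * hab
      · linear_combination x * hab
    have hbx : b * x = 0 := by
      refine hzero (b * x) ?_ ?_
      · linear_combination x * hab
      · linear_combination b * hx - x * hab
    exact hzero x hax hbx
  obtain ⟨c, hc⟩ := (htotal (a + b) hreg).exists_left_inv
  -- the two ideals
  refine ⟨Ideal.span {a}, Ideal.span {b}, ?_, ?_, ?_, ?_, ?_⟩
  · -- intersection is ⊥
    rw [eq_bot_iff]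
    intro x hx
    obtain ⟨hxa, hxb⟩ := Submodule.mem_inf.mp hx
    obtain ⟨s, hx1⟩ := Ideal.mem_span_singleton.mp hxa
    obtain ⟨t, hx2⟩ := Ideal.mem_span_singleton.mp hxb
    have : x = 0 := by
      linear_combination -x * hc + c * b * hx1 + c * a * hx2 + c * (s + t) * hab
    simp [this]
  · -- sup is ⊤
    rw [Ideal.eq_top_iff_one]
    have h1 : c * a ∈ Ideal.span ({a} : Set A) := Ideal.mem_span_singleton.mpr ⟨c, mul_comm c a⟩
    have h2 : c * b ∈ Ideal.span ({b} : Set A) := Ideal.mem_span_singleton.mpr ⟨c, mul_comm c b⟩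
    have : (1 : A) = c * a + c * b := by linear_combination -hc
    rw [this]
    exact Submodule.add_mem_sup h1 h2
  · -- ring equivalence
    have hinf0 : Ideal.span ({a} : Set A) ⊓ Ideal.span ({b} : Set A) = ⊥ := by
      rw [eq_bot_iff]
      intro x hx
      obtain ⟨hxa, hxb⟩ := Submodule.mem_inf.mp hx
      obtain ⟨s, hx1⟩ := Ideal.mem_span_singleton.mp hxa
      obtain ⟨t, hx2⟩ := Ideal.mem_span_singleton.mp hxb
      have : x = 0 := by
        linear_combination -x * hc + c * b * hx1 + c * a * hx2 + c * (s + t) * hab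
      simp [this]
    have hsup0 : Ideal.span ({a} : Set A) ⊔ Ideal.span ({b} : Set A) = ⊤ := by
      rw [Ideal.eq_top_iff_one]
      have h1 : c * a ∈ Ideal.span ({a} : Set A) := Ideal.mem_span_singleton.mpr ⟨c, mul_comm c a⟩
      have h2 : c * b ∈ Ideal.span ({b} : Set A) := Ideal.mem_span_singleton.mpr ⟨c, mul_comm c b⟩
      have : (1 : A) = c * a + c * b := by linear_combination -hc
      rw [this]
      exact Submodule.add_mem_sup h1 h2
    have hco : IsCoprime (Ideal.span ({a} : Set A)) (Ideal.span ({b} : Set A)) :=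
      Ideal.isCoprime_iff_sup_eq.mpr hsup0
    exact ⟨(RingEquiv.quotientBot A).symm.trans ((Ideal.quotEquivOfEq hinf0.symm).trans
      (Ideal.quotientInfEquivQuotientProd _ _ hco))⟩
  · -- first bijection
    exact side_equiv_aux e he a b c hab hc hK2
  · -- second bijection
    have hc' : c * (b + a) = 1 := by linear_combination hc
    have hba : b * a = 0 := by linear_combination hab
    exact side_equiv_aux (e.trans (Equiv.prodComm _ _))
      (fun I J => (he I J).trans and_comm) b a c hba hc' hK1
end

section
/- For a commutative ring A, the set of principal ideals of A is finite if and only if the set of all ideals of A is finite. -/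
/-- For a commutative ring `A`, the set of principal ideals of `A`
is finite iff the set of all ideals of `A` is finite. -/
theorem finite_principal_ideals_iff_finite_ideals
    {A : Type*} [CommRing A] :
    Finite {I : Ideal A // I.IsPrincipal} ↔ Finite (Ideal A) := by
  constructor
  · intro h
    have hinj : Function.Injective
        (fun I : Ideal A => {J : {I : Ideal A // I.IsPrincipal} | J.1 ≤ I}) := by
      intro I I' hII
      ext x
      have h1 := Set.ext_iff.mp hII ⟨Ideal.span {x}, ⟨x, rfl⟩⟩
      simp only [Set.mem_setOf_eq, Ideal.span_singleton_le_iff_mem] at h1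
      exact h1
    exact Finite.of_injective _ hinj
  · intro h
    exact Subtype.finite
end

section
/- For a commutative ring A, the set of principal ideals of A is finite if and only if A is isomorphic as a ring to a product A₁ × A₂, where A₁ is an artinian principal ideal ring and A₂ is a finite ring. -/
universe u

open IsLocalRing

section Helpers

variable {R : Type*} [CommRing R]

/-- If the set of principal ideals is finite, then the set of all ideals is finite. -/
lemma finite_ideal_of_finite_principal
    (h : Finite {I : Ideal R // I.IsPrincipal}) : Finite (Ideal R) := by
  classical
  let f : Ideal R → Set {I : Ideal R // I.IsPrincipal} := fun I ↦ {P | P.1 ≤ I}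
  have key : ∀ K L : Ideal R, f K = f L → K ≤ L := by
    intro K L hKL x hx
    have hmem : (⟨Ideal.span {x}, ⟨⟨x, rfl⟩⟩⟩ : {I : Ideal R // I.IsPrincipal}) ∈ f K := by
      simp only [f, Set.mem_setOf_eq]
      exact Ideal.span_le.mpr (Set.singleton_subset_iff.mpr hx)
    rw [hKL] at hmem
    exact hmem (Ideal.mem_span_singleton_self x)
  have hf : Function.Injective f := fun K L h ↦ le_antisymm (key _ _ h) (key _ _ h.symm)
  exact Finite.of_injective f hf

lemma artinian_of_finite_ideal [Finite (Ideal R)] : IsArtinianRing R :=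
  Finite.to_wellFoundedLT

lemma noetherian_of_finite_ideal [Finite (Ideal R)] : IsNoetherianRing R :=
  isNoetherian_iff'.mpr Finite.to_wellFoundedGT

lemma subsingleton_ideal [Subsingleton R] : Subsingleton (Ideal R) := by
  constructor
  intro I J
  ext x
  rw [show x = 0 from Subsingleton.elim x 0]
  simp

lemma pir_of_subsingleton [Subsingleton R] : IsPrincipalIdealRing R := by
  haveI := subsingleton_ideal (R := R)
  exact ⟨fun I ↦ ⟨⟨0, Subsingleton.elim _ _⟩⟩⟩

/-- In a local ring with principal, nilpotent maximal ideal, every ideal is a power of the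
maximal ideal. -/
lemma local_ideal_eq_pow [IsLocalRing R] {t : R}
    (ht : maximalIdeal R = Ideal.span {t}) {N : ℕ}
    (hN : maximalIdeal R ^ N = ⊥) (I : Ideal R) :
    ∃ k ≤ N, I = maximalIdeal R ^ k := by
  classical
  by_cases htop : I = ⊤
  · exact ⟨0, Nat.zero_le _, by rw [htop, pow_zero, Ideal.one_eq_top]⟩
  by_cases hbot : I = ⊥
  · exact ⟨N, le_rfl, by rw [hbot, hN]⟩
  set P : ℕ → Prop := fun k ↦ I ≤ maximalIdeal R ^ k with hP
  have hP0 : P 0 := by simp [P, pow_zero, Ideal.one_eq_top]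
  have hPN : ¬ P N := by
    intro hle
    exact hbot (le_bot_iff.mp (hN ▸ hle))
  set k := Nat.findGreatest P N with hk
  have hPk : P k := Nat.findGreatest_spec (Nat.zero_le N) hP0
  have hkN : k < N := lt_of_le_of_ne (Nat.findGreatest_le N) (fun h ↦ hPN (h ▸ hPk))
  have hnot : ¬ P (k + 1) := Nat.findGreatest_is_greatest (Nat.lt_succ_self k) hkN
  obtain ⟨x, hxI, hxnot⟩ := SetLike.not_le_iff_exists.mp hnot
  have hxk : x ∈ maximalIdeal R ^ k := hPk hxI
  rw [ht, Ideal.span_singleton_pow] at hxk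
  obtain ⟨c, hc⟩ := Ideal.mem_span_singleton'.mp hxk
  have hcu : IsUnit c := by
    by_contra hcu
    apply hxnot
    have hcm : c ∈ maximalIdeal R := hcu
    have htk : t ^ k ∈ maximalIdeal R ^ k := by
      rw [ht, Ideal.span_singleton_pow]
      exact Ideal.mem_span_singleton_self _
    have : x ∈ maximalIdeal R * maximalIdeal R ^ k := by
      rw [← hc]
      exact Ideal.mul_mem_mul hcm htk
    rwa [← pow_succ'] at this
  refine ⟨k, hkN.le, le_antisymm hPk ?_⟩
  rw [ht, Ideal.span_singleton_pow, Ideal.span_singleton_le_iff_mem]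
  obtain ⟨u, rfl⟩ := hcu
  have : (↑u⁻¹ : R) * x = t ^ k := by
    rw [← hc, ← mul_assoc]
    simp
  exact this ▸ I.mul_mem_left _ hxI

lemma local_finite_ideal [IsLocalRing R]
    (hp : (maximalIdeal R).IsPrincipal) {N : ℕ}
    (hN : maximalIdeal R ^ N = ⊥) : Finite (Ideal R) := by
  obtain ⟨t, ht0⟩ := hp
  have ht : maximalIdeal R = Ideal.span {t} := ht0
  apply Finite.of_surjective (fun k : Fin (N + 1) ↦ maximalIdeal R ^ (k : ℕ))
  intro I
  obtain ⟨k, hk, rfl⟩ := local_ideal_eq_pow ht hN I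
  exact ⟨⟨k, Nat.lt_succ_of_le hk⟩, rfl⟩

lemma local_pir [IsLocalRing R]
    (hp : (maximalIdeal R).IsPrincipal) {N : ℕ}
    (hN : maximalIdeal R ^ N = ⊥) : IsPrincipalIdealRing R := by
  obtain ⟨t, ht0⟩ := hp
  have ht : maximalIdeal R = Ideal.span {t} := ht0
  constructor
  intro I
  obtain ⟨k, _, rfl⟩ := local_ideal_eq_pow ht hN I
  refine ⟨⟨t ^ k, ?_⟩⟩
  rw [ht]
  exact Ideal.span_singleton_pow t k

/-- Counting lemma: if `m` is a maximal ideal not containing `I`, the quotient `R ⧸ I` has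
strictly fewer maximal ideals. -/
lemma card_maximal_quotient_lt [Finite {I : Ideal R // I.IsMaximal}]
    {I m : Ideal R} (hm : m.IsMaximal) (h : ¬ I ≤ m) :
    Nat.card {K : Ideal (R ⧸ I) // K.IsMaximal} < Nat.card {J : Ideal R // J.IsMaximal} := by
  classical
  have hsurj : Function.Surjective (Ideal.Quotient.mk I) := Ideal.Quotient.mk_surjective
  let e : {K : Ideal (R ⧸ I) // K.IsMaximal} → {J : Ideal R // J.IsMaximal} :=
    fun K ↦ ⟨Ideal.comap (Ideal.Quotient.mk I) K.1,
      letI := K.2; Ideal.comap_isMaximal_of_surjective _ hsurj⟩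
  have he : Function.Injective e := by
    intro K L hKL
    exact Subtype.ext (Ideal.comap_injective_of_surjective _ hsurj
      (congrArg Subtype.val hKL))
  have hle : ∀ K : {K : Ideal (R ⧸ I) // K.IsMaximal}, I ≤ (e K).1 := by
    intro K x hx
    have h0 : Ideal.Quotient.mk I x = 0 := Ideal.Quotient.eq_zero_iff_mem.mpr hx
    show Ideal.Quotient.mk I x ∈ K.1
    rw [h0]; exact K.1.zero_mem
  have hrange : ∀ K, e K ≠ ⟨m, hm⟩ := by
    intro K hK
    exact h (by rw [← show (e K).1 = m from congrArg Subtype.val hK]; exact hle K)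
  haveI hKfin : Finite {K : Ideal (R ⧸ I) // K.IsMaximal} := Finite.of_injective e he
  let g : {K : Ideal (R ⧸ I) // K.IsMaximal} ⊕ Unit → {J : Ideal R // J.IsMaximal} :=
    Sum.elim e (fun _ ↦ ⟨m, hm⟩)
  have hg : Function.Injective g := by
    rintro (K | ⟨⟩) (L | ⟨⟩) hKL
    · exact congrArg Sum.inl (he hKL)
    · exact absurd hKL (hrange K)
    · exact absurd hKL.symm (hrange L)
    · rfl
  have hcard := Nat.card_le_card_of_injective g hg
  rw [Nat.card_sum] at hcard
  simp only [Nat.card_eq_fintype_card, Fintype.card_unit] at hcard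
  omega

/-- Splitting an artinian ring with at least two maximal ideals into a product of two quotients,
each with strictly fewer maximal ideals. -/
lemma split_artinian [IsArtinianRing R] {m₁ m₂ : Ideal R}
    (h₁ : m₁.IsMaximal) (h₂ : m₂.IsMaximal) (hne : m₁ ≠ m₂) :
    ∃ (I₁ I₂ : Ideal R), Nonempty (R ≃+* (R ⧸ I₁) × (R ⧸ I₂)) ∧
      Nat.card {K : Ideal (R ⧸ I₁) // K.IsMaximal} < Nat.card {J : Ideal R // J.IsMaximal} ∧
      Nat.card {K : Ideal (R ⧸ I₂) // K.IsMaximal} < Nat.card {J : Ideal R // J.IsMaximal} := by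
  classical
  haveI : Finite {I : Ideal R // I.IsMaximal} :=
    (IsArtinianRing.setOfPred_isMaximal_finite R).to_subtype
  obtain ⟨N₀, hN₀⟩ := IsArtinianRing.isNilpotent_jacobson_bot (R := R)
  set N := N₀ + 1 with hNdef
  have hN : (Ideal.jacobson (⊥ : Ideal R)) ^ N = ⊥ := by
    rw [pow_succ, hN₀, zero_mul, Ideal.zero_eq_bot]
  set F := (IsArtinianRing.setOfPred_isMaximal_finite R).toFinset with hF
  have hmF : ∀ {m : Ideal R}, m.IsMaximal → m ∈ F := by
    intro m hm
    rw [hF, Set.Finite.mem_toFinset]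
    exact hm
  set S := F.erase m₁ with hS
  set J' := S.inf id with hJ'
  have hJle : ¬ J' ≤ m₁ := by
    intro hle
    obtain ⟨m', hm'S, hm'le⟩ := (Ideal.IsPrime.inf_le' h₁.isPrime).mp hle
    have hm'max : m'.IsMaximal := by
      have := Finset.mem_of_mem_erase hm'S
      rwa [hF, Set.Finite.mem_toFinset] at this
    exact (Finset.ne_of_mem_erase hm'S) (hm'max.eq_of_le h₁.ne_top hm'le)
  have hsup : m₁ ⊔ J' = ⊤ := by
    by_contra hne'
    exact hJle (le_sup_right.trans (h₁.eq_of_le hne' le_sup_left).ge)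
  have cop : IsCoprime (m₁ ^ N) (J' ^ N) := (Ideal.isCoprime_iff_sup_eq.mpr hsup).pow
  have hjac : m₁ ⊓ J' ≤ Ideal.jacobson (⊥ : Ideal R) := by
    rw [Ideal.jacobson]
    refine le_sInf fun J hJ ↦ ?_
    obtain ⟨-, hJmax⟩ := hJ
    by_cases hJm : J = m₁
    · exact inf_le_left.trans hJm.ge
    · refine inf_le_right.trans (Finset.inf_le ?_)
      exact Finset.mem_erase.mpr ⟨hJm, hmF hJmax⟩
  have cbot : m₁ ^ N ⊓ J' ^ N = ⊥ := by
    rw [Ideal.inf_eq_mul_of_isCoprime cop, ← mul_pow]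
    have h1 : m₁ * J' ≤ Ideal.jacobson (⊥ : Ideal R) := Ideal.mul_le_inf.trans hjac
    have h2 := Ideal.pow_right_mono h1 N
    rw [hN] at h2
    exact le_bot_iff.mp h2
  refine ⟨m₁ ^ N, J' ^ N, ⟨?_⟩, ?_, ?_⟩
  · exact (RingEquiv.quotientBot R).symm.trans
      ((Ideal.quotEquivOfEq cbot.symm).trans (Ideal.quotientInfEquivQuotientProd _ _ cop))
  · refine card_maximal_quotient_lt h₂ (fun hle ↦ hne ?_)
    haveI := h₂.isPrime
    exact h₁.eq_of_le h₂.ne_top (Ideal.IsPrime.le_of_pow_le hle)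
  · refine card_maximal_quotient_lt h₁ (fun hle ↦ hJle ?_)
    haveI := h₁.isPrime
    exact Ideal.IsPrime.le_of_pow_le hle

/-- A finite kernel, finite codomain extension lemma for additive groups. -/
lemma finite_of_finite_ker_of_finite {G H : Type*} [AddCommGroup G] [AddCommGroup H]
    (f : G →+ H) [Finite H] (hker : Finite f.ker) : Finite G := by
  classical
  have hinj : Function.Injective (fun g : G ↦
      ((f g, ⟨g - Function.invFun f (f g), by
        simp [AddMonoidHom.mem_ker, map_sub, Function.invFun_eq ⟨g, rfl⟩]⟩) : H × f.ker)) := by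
    intro g g' hgg'
    simp only [Prod.mk.injEq, Subtype.mk.injEq] at hgg'
    obtain ⟨h1, h2⟩ := hgg'
    rw [h1] at h2
    exact sub_left_inj.mp h2
  exact Finite.of_injective _ hinj

/-- In a noetherian local ring with finite residue field, quotients by powers of the maximal
ideal are finite. -/
lemma quotient_pow_finite [IsLocalRing R] [IsNoetherianRing R]
    [Finite (ResidueField R)] (i : ℕ) : Finite (R ⧸ (maximalIdeal R ^ i)) := by
  induction i with
  | zero =>
    haveI : Subsingleton (R ⧸ (maximalIdeal R ^ 0)) := by
      rw [pow_zero, Ideal.one_eq_top]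
      exact Ideal.Quotient.subsingleton_iff.mpr rfl
    infer_instance
  | succ i ih =>
    classical
    set m := maximalIdeal R with hm
    let f := Ideal.Quotient.factor (S := m ^ (i + 1)) (T := m ^ i) (Ideal.pow_le_pow_right (Nat.le_succ i))
    haveI : Finite (R ⧸ m ^ i) := ih
    haveI hkerfin : Finite f.toAddMonoidHom.ker := by
      obtain ⟨s, hs⟩ := IsNoetherian.noetherian (m ^ i)
      let sec : ResidueField R → R := Function.surjInv Ideal.Quotient.mk_surjective
      have hsec : ∀ y : ResidueField R, Ideal.Quotient.mk (maximalIdeal R) (sec y) = y :=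
        fun y ↦ Function.surjInv_eq _ y
      let G : ({x // x ∈ s} → ResidueField R) → R ⧸ m ^ (i + 1) :=
        fun b ↦ Ideal.Quotient.mk _ (∑ t ∈ s.attach, sec (b t) * t.1)
      have hrange : (f.toAddMonoidHom.ker : Set (R ⧸ m ^ (i + 1))) ⊆ Set.range G := by
        intro x hx
        obtain ⟨r, rfl⟩ := Ideal.Quotient.mk_surjective x
        have hr : r ∈ m ^ i := by
          have h0 : f (Ideal.Quotient.mk _ r) = 0 := hx
          rwa [show f (Ideal.Quotient.mk _ r) = Ideal.Quotient.mk (m ^ i) r from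
            Ideal.Quotient.factor_mk _ _, Ideal.Quotient.eq_zero_iff_mem] at h0
        rw [← hs] at hr
        obtain ⟨c, -, hc⟩ := Submodule.mem_span_finset.mp hr
        refine ⟨fun t ↦ Ideal.Quotient.mk _ (c t.1), ?_⟩
        show Ideal.Quotient.mk _ _ = Ideal.Quotient.mk _ r
        rw [Ideal.Quotient.mk_eq_mk_iff_sub_mem]
        have hrw : (∑ t ∈ s.attach, sec (Ideal.Quotient.mk (maximalIdeal R) (c t.1)) * t.1) - r
            = ∑ t ∈ s.attach, (sec (Ideal.Quotient.mk (maximalIdeal R) (c t.1)) - c t.1) * t.1 := by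
          simp only [smul_eq_mul] at hc
          have hr2 : r = ∑ t ∈ s.attach, c t.1 * t.1 := by
            rw [← hc]
            exact (Finset.sum_attach s fun j ↦ c j * j).symm
          rw [hr2, ← Finset.sum_sub_distrib]
          congr 1
          ext t
          ring
        rw [hrw]
        refine Ideal.sum_mem _ fun t _ ↦ ?_
        have hd : sec (Ideal.Quotient.mk (maximalIdeal R) (c t.1)) - c t.1 ∈ m := by
          rw [← Ideal.Quotient.eq_zero_iff_mem (I := maximalIdeal R)]
          rw [map_sub]
          exact sub_eq_zero.mpr (hsec _)
        have htm : (t.1 : R) ∈ m ^ i := hs ▸ Submodule.subset_span t.2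
        have := Ideal.mul_mem_mul hd htm
        rwa [← pow_succ'] at this
      have hfin : ((f.toAddMonoidHom.ker : Set (R ⧸ m ^ (i + 1)))).Finite :=
        (Set.finite_range G).subset hrange
      exact hfin.to_subtype
    exact finite_of_finite_ker_of_finite f.toAddMonoidHom hkerfin

lemma finite_of_residue_finite [IsLocalRing R] [IsNoetherianRing R] [IsArtinianRing R]
    [Finite (ResidueField R)] : Finite R := by
  obtain ⟨N, hN⟩ := IsArtinianRing.isNilpotent_jacobson_bot (R := R)
  have hm : maximalIdeal R ^ N = ⊥ := by
    rw [← IsLocalRing.jacobson_eq_maximalIdeal (⊥ : Ideal R) bot_ne_top]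
    exact hN
  have hfin := quotient_pow_finite (R := R) N
  rw [hm] at hfin
  exact Finite.of_equiv _ (RingEquiv.quotientBot R).toEquiv

/-- Key lemma: in a local ring with finitely many ideals whose maximal ideal is not principal,
the residue field is finite. -/
lemma residue_finite_of_not_principal [IsLocalRing R] [Finite (Ideal R)]
    (h : ¬ (maximalIdeal R).IsPrincipal) : Finite (ResidueField R) := by
  classical
  haveI : IsNoetherianRing R := noetherian_of_finite_ideal
  set k := ResidueField R
  set V := CotangentSpace R with hV
  haveI hFsub : Finite (Submodule k V) := by
    let g : Submodule k V → Ideal R := fun W ↦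
      Submodule.map (maximalIdeal R).subtype
        (Submodule.comap ((maximalIdeal R).toCotangent) (W.restrictScalars R))
    have hg : Function.Injective g := by
      intro W W' hWW'
      apply Submodule.restrictScalars_injective R
      apply Submodule.comap_injective_of_surjective (Ideal.toCotangent_surjective (maximalIdeal R))
      exact Submodule.map_injective_of_injective (Submodule.injective_subtype _) hWW'
    exact Finite.of_injective g hg
  have h2 : ¬ Module.finrank k V ≤ 1 :=
    fun hle ↦ h (IsLocalRing.finrank_cotangentSpace_le_one_iff.mp hle)
  have htop : ¬ (⊤ : Submodule k V).IsPrincipal :=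
    fun hpr ↦ h2 (Module.finrank_le_one_iff_top_isPrincipal.mpr hpr)
  haveI : Nontrivial V := by
    by_contra hs
    rw [not_nontrivial_iff_subsingleton] at hs
    refine htop ⟨0, le_antisymm (fun x _ ↦ ?_) le_top⟩
    rw [show x = 0 from Subsingleton.elim x 0]
    exact Submodule.subset_span rfl
  obtain ⟨v, hv⟩ := exists_ne (0 : V)
  have hw : ∃ w : V, w ∉ Submodule.span k {v} := by
    by_contra hall
    push_neg at hall
    exact htop ⟨v, (Submodule.eq_top_iff'.mpr hall).symm⟩
  obtain ⟨w, hw⟩ := hw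
  let f : k → Submodule k V := fun c ↦ Submodule.span k {w + c • v}
  have hf : Function.Injective f := by
    intro c c' hcc'
    have hmem : w + c • v ∈ Submodule.span k {w + c' • v} := by
      rw [show Submodule.span k {w + c' • v} = Submodule.span k {w + c • v} from hcc'.symm]
      exact Submodule.subset_span rfl
    obtain ⟨a, ha⟩ := Submodule.mem_span_singleton.mp hmem
    rw [smul_add, smul_smul] at ha
    have ha' : (a - 1) • w = (c - a * c') • v := by
      rw [sub_smul, one_smul, sub_smul]
      rw [show a • w = (w + c • v) - (a * c') • v by rw [← ha]; abel]
      abel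
    by_cases hA : a = 1
    · rw [hA, sub_self, zero_smul, one_mul] at ha'
      have h0 : (c - c') • v = 0 := ha'.symm
      rcases smul_eq_zero.mp h0 with h | h
      · exact sub_eq_zero.mp h
      · exact absurd h hv
    · exfalso
      apply hw
      have hw' : w = ((a - 1)⁻¹ * (c - a * c')) • v := by
        rw [mul_smul, ← ha', smul_smul, inv_mul_cancel₀ (sub_ne_zero.mpr hA), one_smul]
      rw [hw']
      exact Submodule.mem_span_singleton.mpr ⟨_, rfl⟩
  exact Finite.of_injective f hf

/-- Product of two principal ideal rings is a principal ideal ring. -/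
lemma pir_prod (R' S' : Type*) [CommRing R'] [CommRing S']
    [IsPrincipalIdealRing R'] [IsPrincipalIdealRing S'] : IsPrincipalIdealRing (R' × S') := by
  constructor
  intro K
  have hK : K = Ideal.prod (Ideal.idealProdEquiv K).1 (Ideal.idealProdEquiv K).2 := by
    rw [← Ideal.idealProdEquiv_symm_apply]
    exact (Ideal.idealProdEquiv.symm_apply_apply K).symm
  obtain ⟨a, ha⟩ := IsPrincipalIdealRing.principal (Ideal.idealProdEquiv K).1
  obtain ⟨b, hb⟩ := IsPrincipalIdealRing.principal (Ideal.idealProdEquiv K).2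
  refine ⟨⟨(a, b), ?_⟩⟩
  rw [hK, ha, hb]
  ext ⟨x, y⟩
  rw [Ideal.mem_prod]
  constructor
  · rintro ⟨hx, hy⟩
    obtain ⟨cx, hcx⟩ := Ideal.mem_span_singleton'.mp hx
    obtain ⟨cy, hcy⟩ := Ideal.mem_span_singleton'.mp hy
    exact Ideal.mem_span_singleton'.mpr ⟨(cx, cy), by
      rw [Prod.mk_mul_mk, hcx, hcy]⟩
  · intro hxy
    obtain ⟨⟨cx, cy⟩, hc⟩ := Ideal.mem_span_singleton'.mp hxy
    rw [Prod.mk_mul_mk, Prod.mk.injEq] at hc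
    exact ⟨Ideal.mem_span_singleton'.mpr ⟨cx, hc.1⟩, Ideal.mem_span_singleton'.mpr ⟨cy, hc.2⟩⟩

/-- Ring equivalence congruence for products. -/
def ringEquivProdCongr {R₁ S₁ R₂ S₂ : Type*} [CommRing R₁] [CommRing S₁] [CommRing R₂]
    [CommRing S₂] (e₁ : R₁ ≃+* R₂) (e₂ : S₁ ≃+* S₂) : R₁ × S₁ ≃+* R₂ × S₂ where
  toFun p := (e₁ p.1, e₂ p.2)
  invFun p := (e₁.symm p.1, e₂.symm p.2)
  left_inv p := by simp
  right_inv p := by simp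
  map_add' p q := by simp [Prod.ext_iff]
  map_mul' p q := by simp [Prod.ext_iff]

end Helpers

section MainInduction

/-- An artinian principal ideal ring has finitely many ideals (by induction on the number of
maximal ideals). -/
lemma finite_ideal_of_artinian_pir_aux :
    ∀ (n : ℕ) (R : Type u) [CommRing R], IsArtinianRing R → IsPrincipalIdealRing R →
      Nat.card {I : Ideal R // I.IsMaximal} ≤ n → Finite (Ideal R) := by
  intro n
  induction n using Nat.strong_induction_on with
  | _ n IH =>
    intro R _ hart hpir hcard
    haveI := hart
    haveI := hpir
    haveI hmaxfin : Finite {I : Ideal R // I.IsMaximal} :=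
      (IsArtinianRing.setOfPred_isMaximal_finite R).to_subtype
    rcases Nat.lt_or_ge 1 (Nat.card {I : Ideal R // I.IsMaximal}) with hbig | hsmall
    · -- at least two maximal ideals: split
      haveI : Nontrivial {I : Ideal R // I.IsMaximal} :=
        Finite.one_lt_card_iff_nontrivial.mp hbig
      obtain ⟨⟨m₁, h₁⟩, ⟨m₂, h₂⟩, hne⟩ := exists_pair_ne {I : Ideal R // I.IsMaximal}
      obtain ⟨I₁, I₂, ⟨e⟩, hc₁, hc₂⟩ :=
        split_artinian h₁ h₂ (fun h ↦ hne (Subtype.ext h))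
      haveI a1 : IsArtinianRing (R ⧸ I₁) :=
        (Ideal.Quotient.mk_surjective (I := I₁)).isArtinianRing
      haveI a2 : IsArtinianRing (R ⧸ I₂) :=
        (Ideal.Quotient.mk_surjective (I := I₂)).isArtinianRing
      have p1 : IsPrincipalIdealRing (R ⧸ I₁) :=
        IsPrincipalIdealRing.of_surjective (Ideal.Quotient.mk I₁) Ideal.Quotient.mk_surjective
      have p2 : IsPrincipalIdealRing (R ⧸ I₂) :=
        IsPrincipalIdealRing.of_surjective (Ideal.Quotient.mk I₂) Ideal.Quotient.mk_surjective
      haveI f1 : Finite (Ideal (R ⧸ I₁)) :=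
        IH _ (lt_of_lt_of_le hc₁ hcard) (R ⧸ I₁) a1 p1 le_rfl
      haveI f2 : Finite (Ideal (R ⧸ I₂)) :=
        IH _ (lt_of_lt_of_le hc₂ hcard) (R ⧸ I₂) a2 p2 le_rfl
      haveI : Finite (Ideal ((R ⧸ I₁) × (R ⧸ I₂))) :=
        Finite.of_equiv _ Ideal.idealProdEquiv.symm.toEquiv
      exact Finite.of_injective _
        (Ideal.orderEmbeddingOfSurjective (f := (e.symm : (R ⧸ I₁) × (R ⧸ I₂) →+* R))
          e.symm.surjective).injective
    · -- at most one maximal ideal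
      rcases Nat.le_one_iff_eq_zero_or_eq_one.mp hsmall with h0 | h1
      · -- no maximal ideal: R is trivial
        haveI : Subsingleton R := by
          by_contra hs
          rw [not_subsingleton_iff_nontrivial] at hs
          obtain ⟨m, hm⟩ := Ideal.exists_maximal R
          have : Nonempty {I : Ideal R // I.IsMaximal} := ⟨⟨m, hm⟩⟩
          rw [Nat.card_eq_zero] at h0
          rcases h0 with h | h
          · exact h.elim' this.some
          · exact h.not_finite hmaxfin
        haveI := subsingleton_ideal (R := R)
        infer_instance
      · -- local case
        haveI : IsLocalRing R := by
          obtain ⟨⟨m, hm⟩, hmu⟩ := Nat.card_eq_one_iff_exists.mp h1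
          exact IsLocalRing.of_unique_max_ideal
            ⟨m, hm, fun J hJ ↦ congrArg Subtype.val (hmu ⟨J, hJ⟩)⟩
        obtain ⟨N, hN⟩ := IsArtinianRing.isNilpotent_jacobson_bot (R := R)
        have hm : maximalIdeal R ^ N = ⊥ := by
          rw [← IsLocalRing.jacobson_eq_maximalIdeal (⊥ : Ideal R) bot_ne_top]
          exact hN
        exact local_finite_ideal (IsPrincipalIdealRing.principal _) hm

lemma finite_ideal_of_artinian_pir (R : Type u) [CommRing R] [IsArtinianRing R]
    [IsPrincipalIdealRing R] : Finite (Ideal R) := by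
  haveI : Finite {I : Ideal R // I.IsMaximal} :=
    (IsArtinianRing.setOfPred_isMaximal_finite R).to_subtype
  exact finite_ideal_of_artinian_pir_aux (Nat.card {I : Ideal R // I.IsMaximal}) R
    inferInstance inferInstance le_rfl

/-- Main decomposition lemma: a commutative ring with finitely many ideals decomposes as a
product of an artinian PIR and a finite ring. -/
lemma decomp_of_finite_ideal :
    ∀ (n : ℕ) (R : Type u) [CommRing R], Finite (Ideal R) →
      Nat.card {I : Ideal R // I.IsMaximal} ≤ n →
      ∃ (A₁ A₂ : Type u) (_ : CommRing A₁) (_ : CommRing A₂),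
        IsArtinianRing A₁ ∧ IsPrincipalIdealRing A₁ ∧ Finite A₂ ∧
          Nonempty (R ≃+* A₁ × A₂) := by
  intro n
  induction n using Nat.strong_induction_on with
  | _ n IH =>
    intro R _ hfin hcard
    haveI := hfin
    haveI hart : IsArtinianRing R := artinian_of_finite_ideal
    haveI hmaxfin : Finite {I : Ideal R // I.IsMaximal} := Subtype.finite
    rcases Nat.lt_or_ge 1 (Nat.card {I : Ideal R // I.IsMaximal}) with hbig | hsmall
    · -- at least two maximal ideals: split and recurse
      haveI : Nontrivial {I : Ideal R // I.IsMaximal} :=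
        Finite.one_lt_card_iff_nontrivial.mp hbig
      obtain ⟨⟨m₁, h₁⟩, ⟨m₂, h₂⟩, hne⟩ := exists_pair_ne {I : Ideal R // I.IsMaximal}
      obtain ⟨I₁, I₂, ⟨e⟩, hc₁, hc₂⟩ :=
        split_artinian h₁ h₂ (fun h ↦ hne (Subtype.ext h))
      haveI f1 : Finite (Ideal (R ⧸ I₁)) := Finite.of_injective _
        (Ideal.orderEmbeddingOfSurjective (f := Ideal.Quotient.mk I₁)
          Ideal.Quotient.mk_surjective).injective
      haveI f2 : Finite (Ideal (R ⧸ I₂)) := Finite.of_injective _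
        (Ideal.orderEmbeddingOfSurjective (f := Ideal.Quotient.mk I₂)
          Ideal.Quotient.mk_surjective).injective
      obtain ⟨B₁, B₂, _, _, hB1a, hB1p, hB2f, ⟨eB⟩⟩ :=
        IH _ (lt_of_lt_of_le hc₁ hcard) (R ⧸ I₁) f1 le_rfl
      obtain ⟨C₁, C₂, _, _, hC1a, hC1p, hC2f, ⟨eC⟩⟩ :=
        IH _ (lt_of_lt_of_le hc₂ hcard) (R ⧸ I₂) f2 le_rfl
      haveI := hB1a; haveI := hB1p; haveI := hB2f
      haveI := hC1a; haveI := hC1p; haveI := hC2f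
      refine ⟨B₁ × C₁, B₂ × C₂, inferInstance, inferInstance, ?_, ?_, ?_, ⟨?_⟩⟩
      · haveI : Finite (Ideal B₁) := finite_ideal_of_artinian_pir B₁
        haveI : Finite (Ideal C₁) := finite_ideal_of_artinian_pir C₁
        haveI : Finite (Ideal (B₁ × C₁)) := Finite.of_equiv _ Ideal.idealProdEquiv.symm.toEquiv
        exact artinian_of_finite_ideal
      · exact pir_prod B₁ C₁
      · infer_instance
      · exact e.trans ((ringEquivProdCongr eB eC).trans
          (RingEquiv.prodProdProdComm B₁ B₂ C₁ C₂))
    · -- at most one maximal ideal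
      rcases Nat.le_one_iff_eq_zero_or_eq_one.mp hsmall with h0 | h1
      · -- trivial ring
        haveI : Subsingleton R := by
          by_contra hs
          rw [not_subsingleton_iff_nontrivial] at hs
          obtain ⟨m, hm⟩ := Ideal.exists_maximal R
          have hne : Nonempty {I : Ideal R // I.IsMaximal} := ⟨⟨m, hm⟩⟩
          rw [Nat.card_eq_zero] at h0
          rcases h0 with h | h
          · exact h.elim' hne.some
          · exact h.not_finite hmaxfin
        refine ⟨R, R, inferInstance, inferInstance, hart, pir_of_subsingleton, inferInstance,
          ⟨RingEquiv.prodZeroRing R R⟩⟩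
      · -- local case
        haveI : IsLocalRing R := by
          obtain ⟨⟨m, hm⟩, hmu⟩ := Nat.card_eq_one_iff_exists.mp h1
          exact IsLocalRing.of_unique_max_ideal
            ⟨m, hm, fun J hJ ↦ congrArg Subtype.val (hmu ⟨J, hJ⟩)⟩
        obtain ⟨N, hN⟩ := IsArtinianRing.isNilpotent_jacobson_bot (R := R)
        have hm : maximalIdeal R ^ N = ⊥ := by
          rw [← IsLocalRing.jacobson_eq_maximalIdeal (⊥ : Ideal R) bot_ne_top]
          exact hN
        by_cases hp : (maximalIdeal R).IsPrincipal
        · exact ⟨R, PUnit.{u + 1}, inferInstance, inferInstance, hart, local_pir hp hm,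
            inferInstance, ⟨RingEquiv.prodZeroRing R PUnit.{u + 1}⟩⟩
        · haveI : Finite (ResidueField R) := residue_finite_of_not_principal hp
          haveI : IsNoetherianRing R := noetherian_of_finite_ideal
          haveI : Finite R := finite_of_residue_finite
          haveI : Subsingleton PUnit.{u + 1} := inferInstance
          haveI : Finite (Ideal PUnit.{u + 1}) := by
            haveI := subsingleton_ideal (R := PUnit.{u + 1})
            infer_instance
          exact ⟨PUnit.{u + 1}, R, inferInstance, inferInstance, artinian_of_finite_ideal,
            pir_of_subsingleton, inferInstance, ⟨RingEquiv.zeroRingProd R PUnit.{u + 1}⟩⟩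

end MainInduction

/-- For a commutative ring `A`, the set of principal ideals of `A`
is finite iff `A` is isomorphic as a ring to a product `A₁ × A₂` where `A₁` is
an artinian principal ideal ring and `A₂` is a finite ring. -/
theorem finite_principal_ideals_iff_artinianPIR_prod_finite
    {A : Type u} [CommRing A] :
    Finite {I : Ideal A // I.IsPrincipal} ↔
      ∃ (A₁ A₂ : Type u) (_ : CommRing A₁) (_ : CommRing A₂),
        IsArtinianRing A₁ ∧ IsPrincipalIdealRing A₁ ∧ Finite A₂ ∧
          Nonempty (A ≃+* A₁ × A₂) := by
  constructor
  · intro h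
    haveI : Finite (Ideal A) := finite_ideal_of_finite_principal h
    exact decomp_of_finite_ideal (Nat.card {I : Ideal A // I.IsMaximal}) A
      inferInstance le_rfl
  · rintro ⟨A₁, A₂, _, _, hart, hpir, hfin, ⟨e⟩⟩
    haveI := hart; haveI := hpir; haveI := hfin
    haveI : Finite (Ideal A₁) := finite_ideal_of_artinian_pir A₁
    haveI : Finite (Ideal A₂) :=
      Finite.of_injective (fun I : Ideal A₂ ↦ (I : Set A₂)) SetLike.coe_injective
    haveI : Finite (Ideal (A₁ × A₂)) := Finite.of_equiv _ Ideal.idealProdEquiv.symm.toEquiv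
    haveI : Finite (Ideal A) := Finite.of_injective _
      (Ideal.orderEmbeddingOfSurjective (f := (e.symm : A₁ × A₂ →+* A))
        e.symm.surjective).injective
    exact Finite.of_injective (fun I : {I : Ideal A // I.IsPrincipal} ↦ I.1)
      Subtype.val_injective
end

section
/- Let A be a nonzero commutative ring in which every zero-divisor is nilpotent. Then for all nonzero zero-divisors a, b ∈ A, the union Ann(a) ∪ Ann(b) is strictly contained in Ann(ab): one has Ann(a) ⊆ Ann(ab), Ann(b) ⊆ Ann(ab), and there exists x ∈ Ann(ab) with x ∉ Ann(a) and x ∉ Ann(b). -/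
/-- Let `A` be a nonzero commutative ring in which every
zero-divisor is nilpotent.  Then for all nonzero zero-divisors `a, b ∈ A`,
`Ann(a) ∪ Ann(b)` is strictly contained in `Ann(ab)`. -/
theorem ann_union_ssubset_ann_mul
    {A : Type*} [CommRing A] [Nontrivial A]
    (hnil : ∀ a : A, (∃ b : A, b ≠ 0 ∧ a * b = 0) → IsNilpotent a)
    (a b : A) (ha : a ≠ 0) (ha' : ∃ c : A, c ≠ 0 ∧ a * c = 0)
    (hb : b ≠ 0) (hb' : ∃ c : A, c ≠ 0 ∧ b * c = 0) :
    (∀ x : A, x * a = 0 → x * (a * b) = 0) ∧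
    (∀ x : A, x * b = 0 → x * (a * b) = 0) ∧
    (∃ x : A, x * (a * b) = 0 ∧ x * a ≠ 0 ∧ x * b ≠ 0) := by
  refine ⟨fun x hx => by rw [← mul_assoc, hx, zero_mul],
    fun x hx => by rw [mul_comm a b, ← mul_assoc, hx, zero_mul], ?_⟩
  classical
  obtain ⟨na, hna⟩ := hnil a ha'
  obtain ⟨nb, hnb⟩ := hnil b hb'
  have hsa : ∃ n, a ^ n * b = 0 := ⟨na, by rw [hna, zero_mul]⟩
  have hta : ∃ n, b ^ n * a = 0 := ⟨nb, by rw [hnb, zero_mul]⟩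
  set s := Nat.find hsa with hs
  set t := Nat.find hta with ht
  have hs0 : a ^ s * b = 0 := Nat.find_spec hsa
  have ht0 : b ^ t * a = 0 := Nat.find_spec hta
  have hs1 : s ≠ 0 := by
    intro h
    exact hb (by simpa [h] using hs0)
  have ht1 : t ≠ 0 := by
    intro h
    exact ha (by simpa [h] using ht0)
  have hsm : a ^ (s - 1) * b ≠ 0 := Nat.find_min hsa (by omega)
  have htm : b ^ (t - 1) * a ≠ 0 := Nat.find_min hta (by omega)
  have hPs : a ^ (s - 1) * a = a ^ s := by
    rw [← pow_succ]; congr 1; omega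
  have hQt : b ^ (t - 1) * b = b ^ t := by
    rw [← pow_succ]; congr 1; omega
  have hPab : a ^ (s - 1) * (a * b) = 0 := by
    rw [← mul_assoc, hPs, hs0]
  have hQab : b ^ (t - 1) * (a * b) = 0 := by
    rw [mul_comm a b, ← mul_assoc, hQt, ht0]
  by_cases hPa : a ^ (s - 1) * a = 0
  · by_cases hQb : b ^ (t - 1) * b = 0
    · refine ⟨a ^ (s - 1) + b ^ (t - 1), ?_, ?_, ?_⟩
      · rw [add_mul, hPab, hQab, add_zero]
      · rw [add_mul, hPa, zero_add]; exact htm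
      · rw [add_mul, hQb, add_zero]; exact hsm
    · exact ⟨b ^ (t - 1), hQab, htm, hQb⟩
  · exact ⟨a ^ (s - 1), hPab, hPa, hsm⟩
end

section
/- Let A be a nonzero artinian commutative ring. Then A is local if and only if for all nonzero zero-divisors a, b ∈ A, the union Ann(a) ∪ Ann(b) is strictly contained in Ann(ab). -/
/-- If `a ≠ 0`, `b` is nilpotent, and `z * (a * b) = 0` implies `z * a = 0` for all `z`,
we get a contradiction. -/
lemma aux_ann {A : Type*} [CommRing A] {a b : A} (ha : a ≠ 0)
    (hbn : ∃ N : ℕ, b ^ N = 0)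
    (h : ∀ z : A, z * (a * b) = 0 → z * a = 0) : False := by
  obtain ⟨N, hN⟩ := hbn
  have hP : ∃ k : ℕ, b ^ k * a = 0 := ⟨N, by rw [hN, zero_mul]⟩
  classical
  set k := Nat.find hP with hk
  have hk0 : k ≠ 0 := by
    intro h0
    have := Nat.find_spec hP
    rw [← hk, h0] at this
    simp at this
    exact ha this
  have hkspec : b ^ k * a = 0 := Nat.find_spec hP
  have hlt : k - 1 < k := Nat.sub_lt (Nat.pos_of_ne_zero hk0) one_pos
  have hmin := Nat.find_min hP hlt
  apply hmin
  apply h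
  have : b ^ (k - 1) * (a * b) = b ^ (k - 1 + 1) * a := by ring
  rw [this, Nat.sub_add_cancel (Nat.one_le_iff_ne_zero.mpr hk0)]
  exact hkspec

/-- A nonzero artinian commutative ring `A` is local iff for all
nonzero zero-divisors `a, b ∈ A`, the union `Ann(a) ∪ Ann(b)` is strictly
contained in `Ann(ab)`. -/
theorem local_iff_ann_union_ssubset
    {A : Type*} [CommRing A] [Nontrivial A] [IsArtinianRing A] :
    IsLocalRing A ↔
      ∀ a b : A, a ≠ 0 → (∃ c : A, c ≠ 0 ∧ a * c = 0) →
        b ≠ 0 → (∃ c : A, c ≠ 0 ∧ b * c = 0) →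
          ({x : A | x * a = 0} ∪ {x : A | x * b = 0}) ⊂ {x : A | x * (a * b) = 0} := by
  constructor
  · intro hL a b ha hza hb hzb
    -- nilpotency of nonunits
    have hnil : ∀ c : A, ¬ IsUnit c → ∃ N : ℕ, c ^ N = 0 := by
      intro c hc
      obtain ⟨N, hN⟩ := IsArtinianRing.isNilpotent_jacobson_bot (R := A)
      refine ⟨N, ?_⟩
      have hcJ : c ∈ Ideal.jacobson (⊥ : Ideal A) := by
        rw [IsLocalRing.jacobson_eq_maximalIdeal (⊥ : Ideal A) bot_ne_top]
        exact hc
      have : c ^ N ∈ (Ideal.jacobson (⊥ : Ideal A)) ^ N := Ideal.pow_mem_pow hcJ N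
      rw [hN] at this
      simpa using this
    have hnu : ∀ c : A, (∃ d : A, d ≠ 0 ∧ c * d = 0) → ¬ IsUnit c := by
      rintro c ⟨d, hd, hcd⟩ hu
      exact hd (hu.mul_left_cancel (by rw [hcd, mul_zero]))
    constructor
    · rintro x (hx | hx)
      · show x * (a * b) = 0
        rw [show x * (a * b) = x * a * b by ring, show x * a = 0 from hx, zero_mul]
      · show x * (a * b) = 0
        rw [show x * (a * b) = x * b * a by ring, show x * b = 0 from hx, zero_mul]
    · intro hsub
      by_cases hc : ∀ z : A, z * (a * b) = 0 → z * a = 0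
      · exact aux_ann ha (hnil b (hnu b hzb)) hc
      · push_neg at hc
        obtain ⟨y, hy1, hy2⟩ := hc
        have hyb : y * b = 0 := by
          rcases hsub hy1 with h | h
          · exact absurd h hy2
          · exact h
        have hcb : ∀ z : A, z * (b * a) = 0 → z * b = 0 := by
          intro z hz
          have hz' : z * (a * b) = 0 := by rw [mul_comm a b]; exact hz
          by_cases hzb' : z * b = 0
          · exact hzb'
          · have hza' : z * a = 0 := by
              rcases hsub hz' with h | h
              · exact h
              · exact absurd h hzb'
            have hsum : (y + z) * (a * b) = 0 := by
              rw [add_mul, hy1, hz', add_zero]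
            rcases hsub hsum with h | h
            · exfalso; apply hy2
              have h' : (y + z) * a = 0 := h
              linear_combination h' - hza'
            · have h' : (y + z) * b = 0 := h
              linear_combination h' - hyb
        exact aux_ann hb (hnil a (hnu a hza)) hcb
  · intro h
    by_contra hnl
    have hex : ∃ a : A, ¬ IsUnit a ∧ ¬ IsUnit (1 - a) := by
      by_contra hc
      push_neg at hc
      exact hnl (IsLocalRing.of_isUnit_or_isUnit_one_sub_self fun a => by
        by_cases hu : IsUnit a
        · exact Or.inl hu
        · exact Or.inr (hc a hu))
    obtain ⟨a, ha1, ha2⟩ := hex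
    -- find idempotent
    have hstab : ∃ n : ℕ, ∃ x : A, x * (a ^ (n+1) * a ^ (n+1)) = a ^ (n+1) := by
      obtain ⟨n, hn⟩ := IsArtinian.monotone_stabilizes (R := A) (M := A)
        ⟨fun k => OrderDual.toDual (Ideal.span {a ^ (k+1)}), by
          intro i j hij
          apply Ideal.span_singleton_le_span_singleton.mpr
          exact ⟨a ^ (j - i), by rw [← pow_add]; congr 1; omega⟩⟩
      have := hn (2*n+1) (by omega)
      have hmem : a ^ (n+1) ∈ Ideal.span ({a ^ (2*n+1+1)} : Set A) := by
        have : Ideal.span ({a ^ (n+1)} : Set A) = Ideal.span {a ^ (2*n+1+1)} :=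
          congrArg OrderDual.ofDual this
        rw [← this]
        exact Ideal.subset_span rfl
      obtain ⟨x, hx⟩ := Ideal.mem_span_singleton'.mp hmem
      refine ⟨n, x, ?_⟩
      have hpow : a ^ (n+1) * a ^ (n+1) = a ^ (2*n+1+1) := by
        rw [← pow_add]; congr 1; omega
      rw [hpow, hx]
    obtain ⟨n, x, hx⟩ := hstab
    set m := n + 1 with hm
    set e := x * a ^ m with he
    have hee : e * e = e := by
      rw [he]; linear_combination x * hx
    have he0 : e ≠ 0 := by
      intro h0
      have ham : a ^ m = 0 := by
        have : a ^ m = e * a ^ m := by rw [he]; linear_combination -hx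
        rw [this, h0, zero_mul]
      exact ha2 ((IsNilpotent.isUnit_one_sub ⟨m, ham⟩))
    have he1 : e ≠ 1 := by
      intro h1
      apply ha1
      apply IsUnit.of_mul_eq_one (a := a) (x * a ^ n)
      rw [← h1, he, hm]; ring
    have h1e : (1 : A) - e ≠ 0 := sub_ne_zero.mpr (Ne.symm he1)
    have hediv : ∃ c : A, c ≠ 0 ∧ e * c = 0 :=
      ⟨1 - e, h1e, by linear_combination -hee⟩
    have hss := h e e he0 hediv he0 hediv
    rw [Set.union_self] at hss
    exact hss.2 (fun z hz => by
      show z * e = 0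
      have : z * (e * e) = 0 := hz
      rwa [hee] at this)
end

section
/- Let A be a commutative ring, k ≥ 0 an integer, and φ a surjective map from {0, 1, …, k} onto the set of principal ideals of A such that for all i, j ∈ {0, …, k}: φ(i)·φ(j) = (0) if and only if i + j ≥ k (i.e., φ is a surjective strong graph morphism from the staircase graph SG_k onto ζ(A, ∼)). Then for every x ∈ A and all 0 ≤ i ≤ j ≤ k, one has Ann((x)·φ(i)) ⊆ Ann((x)·φ(j)), where for an ideal I of A, Ann(I) = {z ∈ A : zI = 0}. -/
/-- Let `A` be a commutative ring, `k ≥ 0`, and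
`φ : {0,…,k} → {principal ideals of A}` a surjective strong graph morphism from
the staircase graph `SG_k` onto `ζ(A,∼)` (i.e. `φ(i)·φ(j) = 0` iff `i + j ≥ k`).
Then for every `x ∈ A` and all `0 ≤ i ≤ j ≤ k`,
`Ann((x)·φ(i)) ⊆ Ann((x)·φ(j))`. -/
theorem ann_mono_of_staircase_strong_epi
    {A : Type*} [CommRing A] (k : ℕ)
    (φ : Fin (k + 1) → {I : Ideal A // I.IsPrincipal})
    (hsurj : Function.Surjective φ)
    (hadj : ∀ i j : Fin (k + 1), (φ i).1 * (φ j).1 = ⊥ ↔ (i : ℕ) + (j : ℕ) ≥ k) :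
    ∀ (x : A) (i j : Fin (k + 1)), i ≤ j →
      (Ideal.span {x} * (φ i).1).annihilator ≤ (Ideal.span {x} * (φ j).1).annihilator := by
  intro x i j hij z hz
  obtain ⟨m, hm⟩ := hsurj ⟨Ideal.span {z * x}, ⟨z * x, rfl⟩⟩
  have hm' : (φ m).1 = Ideal.span {z * x} := by rw [hm]
  have h1 : Ideal.span {z * x} * (φ i).1 = ⊥ := by
    rw [eq_bot_iff, Ideal.span_singleton_mul_le_iff]
    intro p hp
    have hx : x ∈ Ideal.span ({x} : Set A) := Ideal.mem_span_singleton_self x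
    have := Submodule.mem_annihilator.mp hz (x * p) (Ideal.mul_mem_mul hx hp)
    simp only [smul_eq_mul] at this
    simpa [mul_assoc] using this
  have hk : (m : ℕ) + (i : ℕ) ≥ k := (hadj m i).mp (by rw [hm']; exact h1)
  have hk' : (m : ℕ) + (j : ℕ) ≥ k :=
    le_trans hk (Nat.add_le_add_left (Fin.le_def.mp hij) _)
  have h2 : Ideal.span {z * x} * (φ j).1 = ⊥ := by
    rw [← hm']; exact (hadj m j).mpr hk'
  refine Submodule.mem_annihilator.mpr fun n hn => ?_
  refine Submodule.mul_induction_on hn (fun a ha b hb => ?_) (fun a b ha hb => ?_)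
  · obtain ⟨c, rfl⟩ := Ideal.mem_span_singleton'.mp ha
    have : (z * x) * b = 0 := by
      have := h2 ▸ Ideal.mul_mem_mul (Ideal.mem_span_singleton_self (z * x)) hb
      simpa using this
    calc z • (c * x * b) = c * ((z * x) * b) := by simp only [smul_eq_mul]; ring
    _ = 0 := by rw [this, mul_zero]
  · simp only [smul_eq_mul] at ha hb ⊢
    simp [mul_add, ha, hb]
end

section
/- Let A be a local artinian commutative ring, k > 0 an integer, and φ a bijection from {0, 1, …, k} onto the set of principal ideals of A such that for all i, j ∈ {0, …, k}: φ(i)·φ(j) = (0) if and only if i + j ≥ k (i.e., φ is a graph isomorphism SG_k ≅ ζ(A, ∼)). Then for every x ∈ A and all 0 ≤ i < j ≤ k: if Ann((x)·φ(i)) = Ann((x)·φ(j)), then (x)·φ(i) = (x)·φ(j) = (0). -/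
/-- Let `A` be a local artinian commutative ring, `k > 0`, and
`φ` a graph isomorphism `SG_k ≅ ζ(A,∼)` (a bijection from `{0,…,k}` onto the
principal ideals of `A` with `φ(i)·φ(j) = 0` iff `i + j ≥ k`).  Then for every
`x ∈ A` and all `0 ≤ i < j ≤ k`: if `Ann((x)·φ(i)) = Ann((x)·φ(j))`, then
`(x)·φ(i) = (x)·φ(j) = (0)`. -/
theorem staircase_iso_ann_eq_implies_zero
    {A : Type*} [CommRing A] [IsLocalRing A] [IsArtinianRing A]
    (k : ℕ) (hk : 0 < k)
    (φ : Fin (k + 1) ≃ {I : Ideal A // I.IsPrincipal})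
    (hadj : ∀ i j : Fin (k + 1), (φ i).1 * (φ j).1 = ⊥ ↔ (i : ℕ) + (j : ℕ) ≥ k) :
    ∀ (x : A) (i j : Fin (k + 1)), i < j →
      (Ideal.span {x} * (φ i).1).annihilator = (Ideal.span {x} * (φ j).1).annihilator →
        Ideal.span {x} * (φ i).1 = ⊥ ∧ Ideal.span {x} * (φ j).1 = ⊥ := by
  classical
  -- index of an element
  set p : A → Fin (k+1) := fun z => φ.symm ⟨Ideal.span {z}, ⟨z, rfl⟩⟩ with hpdef
  have hp : ∀ z : A, (φ (p z)).1 = Ideal.span {z} := by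
    intro z; simp [hpdef]
  -- fundamental adjacency in element form
  have hmul : ∀ z w : A, z * w = 0 ↔ k ≤ (p z : ℕ) + (p w : ℕ) := by
    intro z w
    have := hadj (p z) (p w)
    rw [hp, hp, Ideal.span_singleton_mul_span_singleton,
      Ideal.span_singleton_eq_bot, ge_iff_le] at this
    exact this
  -- generators
  have hgen : ∀ q : Fin (k+1), ∃ a : A, (φ q).1 = Ideal.span {a} :=
    fun q => (φ q).2.principal
  choose g hg using hgen
  have hpg : ∀ q : Fin (k+1), p (g q) = q := by
    intro q
    have : (⟨Ideal.span {g q}, ⟨g q, rfl⟩⟩ : {I : Ideal A // I.IsPrincipal}) = φ q :=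
      Subtype.ext (hg q).symm
    simp [hpdef, this]
  have hq_le : ∀ q : Fin (k+1), (q : ℕ) ≤ k := fun q => Nat.lt_succ_iff.mp q.2
  -- membership gives lower bound on index
  have memP : ∀ (q : Fin (k+1)) (z : A), z ∈ (φ q).1 → (q : ℕ) ≤ (p z : ℕ) := by
    intro q z hz
    set q' : Fin (k+1) := ⟨k - q, by omega⟩ with hq'
    have hzw : z * g q' = 0 := by
      have h1 : z * g q' ∈ (φ q).1 * (φ q').1 := by
        exact Ideal.mul_mem_mul hz (by rw [hg q']; exact Ideal.mem_span_singleton_self _)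
      have h2 : (φ q).1 * (φ q').1 = ⊥ := by
        rw [hadj]
        have := hq_le q
        simp [hq']; omega
      rw [h2] at h1; simpa using h1
    have := (hmul z (g q')).mp hzw
    rw [hpg q'] at this
    have hqk := hq_le q
    simp [hq'] at this
    omega
  -- chain lemma: index lower bound gives membership (downward induction)
  have memC : ∀ (n : ℕ) (q : Fin (k+1)), k ≤ (q : ℕ) + n →
      ∀ z : A, (q : ℕ) ≤ (p z : ℕ) → z ∈ (φ q).1 := by
    intro n
    induction n with
    | zero =>
      intro q hq z hz
      have hq' : (q : ℕ) = k := by have := hq_le q; omega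
      have hpz : p z = q := by
        apply Fin.ext; have := hq_le (p z); omega
      rw [← hpz, hp]; exact Ideal.mem_span_singleton_self _
    | succ n ih =>
      intro q hq z hz
      by_cases hcase : k ≤ (q : ℕ) + n
      · exact ih q hcase z hz
      -- so (q:ℕ) + n < k, in particular q+1 ≤ k
      push_neg at hcase
      by_cases hzq : (p z : ℕ) = (q : ℕ)
      · have hpz : p z = q := Fin.ext hzq
        rw [← hpz, hp]; exact Ideal.mem_span_singleton_self _
      have hz1 : (q : ℕ) + 1 ≤ (p z : ℕ) := by omega
      set q1 : Fin (k+1) := ⟨(q : ℕ) + 1, by omega⟩ with hq1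
      have hq1v : (q1 : ℕ) = (q : ℕ) + 1 := rfl
      have hzin : z ∈ (φ q1).1 := ih q1 (by omega) z (by omega)
      -- show (φ q1).1 ≤ (φ q).1
      set a := g q with ha
      set b := g q1 with hb
      set s := a + b with hs
      -- p s ≥ q
      set w : Fin (k+1) := ⟨k - q, by omega⟩ with hw
      have hwv : (w : ℕ) = k - (q : ℕ) := rfl
      have haw : a * g w = 0 := by
        rw [hmul, hpg, hpg]; have := hq_le q; omega
      have hbw : b * g w = 0 := by
        rw [hmul, hpg, hpg]; have := hq_le q; simp [hq1v, hwv]; omega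
      have hsw : s * g w = 0 := by rw [hs, add_mul, haw, hbw, add_zero]
      have hps : (q : ℕ) ≤ (p s : ℕ) := by
        have := (hmul s (g w)).mp hsw
        rw [hpg] at this; have := hq_le q; omega
      by_cases hpsq : (p s : ℕ) = (q : ℕ)
      · -- s ∈ φ q, a ∈ φ q, so b ∈ φ q, and z ∈ span{b}
        have hsin : s ∈ (φ q).1 := by
          have hpsq' : p s = q := Fin.ext hpsq
          rw [← hpsq', hp]; exact Ideal.mem_span_singleton_self _
        have hain : a ∈ (φ q).1 := by
          rw [hg q]; exact Ideal.mem_span_singleton_self _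
        have hbin : b ∈ (φ q).1 := by
          have : s - a ∈ (φ q).1 := Submodule.sub_mem _ hsin hain
          simpa [hs] using this
        have : z ∈ Ideal.span {b} := by rwa [← hg q1]
        rcases Ideal.mem_span_singleton'.mp this with ⟨c, hc⟩
        rw [← hc]; exact Ideal.mul_mem_left _ c hbin
      · -- p s ≥ q+1: then a ∈ φ q1, contradiction on index
        exfalso
        have hsin : s ∈ (φ q1).1 := ih q1 (by omega) s (by simp [hq1v]; omega)
        have hbin : b ∈ (φ q1).1 := by
          rw [hg q1]; exact Ideal.mem_span_singleton_self _
        have hain : a ∈ (φ q1).1 := by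
          have : s - b ∈ (φ q1).1 := Submodule.sub_mem _ hsin hbin
          simpa [hs] using this
        have := memP q1 a hain
        rw [ha, hpg] at this
        simp [hq1v] at this
    -- end induction
  have mono : ∀ i j : Fin (k+1), (i : ℕ) ≤ (j : ℕ) → (φ j).1 ≤ (φ i).1 := by
    intro i j hij z hz
    exact memC k i (by omega) z (le_trans hij (memP j z hz))
  -- main proof
  intro x i j hij hann
  have hijn : (i : ℕ) < (j : ℕ) := hij
  have hjk := hq_le j
  -- rewrite products as singleton spans
  have hxi : Ideal.span {x} * (φ i).1 = Ideal.span {x * g i} := by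
    rw [hg i, Ideal.span_singleton_mul_span_singleton]
  have hxj : Ideal.span {x} * (φ j).1 = Ideal.span {x * g j} := by
    rw [hg j, Ideal.span_singleton_mul_span_singleton]
  obtain ⟨m, hm⟩ : ∃ m, m = p (x * g i) := ⟨_, rfl⟩
  obtain ⟨n, hn⟩ : ∃ n, n = p (x * g j) := ⟨_, rfl⟩
  -- annihilator membership characterization
  have hannmem : ∀ (z y : A), z ∈ (Ideal.span {y}).annihilator ↔ z * y = 0 := by
    intro z y
    simpa [smul_eq_mul] using Submodule.mem_annihilator_span_singleton y z
  rw [hxi, hxj] at hann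
  have hmv : (p (x * g i) : ℕ) = (m : ℕ) := by rw [hm]
  have hnv : (p (x * g j) : ℕ) = (n : ℕ) := by rw [hn]
  have hmk := hq_le m
  have hnk := hq_le n
  have hmn : (m : ℕ) = (n : ℕ) := by
    have h1 : g ⟨k - (m : ℕ), by omega⟩ * (x * g i) = 0 := by
      rw [hmul, hpg]
      show k ≤ k - (m : ℕ) + (p (x * g i) : ℕ)
      omega
    have h2 : g ⟨k - (n : ℕ), by omega⟩ * (x * g j) = 0 := by
      rw [hmul, hpg]
      show k ≤ k - (n : ℕ) + (p (x * g j) : ℕ)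
      omega
    have h1' : g ⟨k - (m : ℕ), by omega⟩ * (x * g j) = 0 := by
      rw [← hannmem, ← hann, hannmem]; exact h1
    have h2' : g ⟨k - (n : ℕ), by omega⟩ * (x * g i) = 0 := by
      rw [← hannmem, hann, hannmem]; exact h2
    have e1 := (hmul _ _).mp h1'
    have e2 := (hmul _ _).mp h2'
    rw [hpg] at e1 e2
    have e1' : k ≤ k - (m : ℕ) + (p (x * g j) : ℕ) := e1
    have e2' : k ≤ k - (n : ℕ) + (p (x * g i) : ℕ) := e2
    omega
  have hIJ : Ideal.span {x * g i} = Ideal.span {x * g j} := by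
    have e : (φ m).1 = (φ n).1 := congrArg (fun t => (φ t).1) (Fin.ext hmn)
    rw [hm, hn, hp, hp] at e
    exact e
  -- i+1 step into maximal ideal
  set i1 : Fin (k+1) := ⟨(i : ℕ) + 1, by omega⟩ with hi1
  have hstep : (φ i1).1 ≤ IsLocalRing.maximalIdeal A * (φ i).1 := by
    have hbin : g i1 ∈ Ideal.span {g i} := by
      rw [← hg i]
      have hle := mono i i1 (by rw [show ((i1 : ℕ)) = (i : ℕ) + 1 from rfl]; omega)
      exact hle (by rw [hg i1]; exact Ideal.mem_span_singleton_self _)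
    rcases Ideal.mem_span_singleton'.mp hbin with ⟨c, hc⟩
    have hcnu : ¬ IsUnit c := by
      intro hcu
      have : Ideal.span {g i1} = Ideal.span {g i} := by
        rw [← hc]; exact Ideal.span_singleton_mul_left_unit hcu _
      have : φ i1 = φ i := Subtype.ext (by rw [hg i1, hg i, this])
      have := φ.injective this
      have : (i1 : ℕ) = (i : ℕ) := congrArg Fin.val this
      simp [hi1] at this
    rw [hg i1, Ideal.span_le]
    intro y hy
    simp only [Set.mem_singleton_iff] at hy
    subst hy
    rw [← hc]
    exact Ideal.mul_mem_mul (IsLocalRing.mem_maximalIdeal c |>.mpr hcnu)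
      (by rw [hg i]; exact Ideal.mem_span_singleton_self _)
  -- Nakayama
  have hle : Ideal.span {x * g j} ≤ IsLocalRing.maximalIdeal A • Ideal.span {x * g j} := by
    calc Ideal.span {x * g j} = Ideal.span {x} * (φ j).1 := hxj.symm
      _ ≤ Ideal.span {x} * (φ i1).1 :=
          Ideal.mul_mono_right (mono i1 j (by rw [show ((i1 : ℕ)) = (i : ℕ) + 1 from rfl]; omega))
      _ ≤ Ideal.span {x} * (IsLocalRing.maximalIdeal A * (φ i).1) :=
          Ideal.mul_mono_right hstep
      _ = IsLocalRing.maximalIdeal A * (Ideal.span {x} * (φ i).1) := by ring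
      _ = IsLocalRing.maximalIdeal A * Ideal.span {x * g j} := by rw [hxi, hIJ]
      _ = IsLocalRing.maximalIdeal A • Ideal.span {x * g j} := by
          rw [smul_eq_mul]
  have hbot : Ideal.span {x * g j} = ⊥ := by
    refine Submodule.eq_bot_of_le_smul_of_le_jacobson_bot (IsLocalRing.maximalIdeal A) _
      (Submodule.fg_span (Set.finite_singleton _)) hle ?_
    rw [IsLocalRing.jacobson_eq_maximalIdeal ⊥ bot_ne_top]
  constructor
  · rw [hxi, hIJ, hbot]
  · rw [hxj, hbot]
end

section
/- Let A be a local artinian commutative ring, k > 0 an integer, and φ a bijection from {0, 1, …, k} onto the set of principal ideals of A such that for all i, j ∈ {0, …, k}: φ(i)·φ(j) = (0) if and only if i + j ≥ k (i.e., φ is a graph isomorphism SG_k ≅ ζ(A, ∼)). Then φ(i) = φ(1)^i (the i-th power of the ideal φ(1)) for every i ∈ {0, …, k}. -/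
/-- Let `A` be a local artinian commutative ring, `k > 0`, and
`φ` a graph isomorphism `SG_k ≅ ζ(A,∼)` (a bijection from `{0,…,k}` onto the
principal ideals of `A` with `φ(i)·φ(j) = 0` iff `i + j ≥ k`).  Then
`φ(i) = φ(1)^i` for every `i ∈ {0,…,k}`. -/
theorem staircase_iso_powers
    {A : Type*} [CommRing A] [IsLocalRing A] [IsArtinianRing A]
    (k : ℕ) (hk : 0 < k)
    (φ : Fin (k + 1) ≃ {I : Ideal A // I.IsPrincipal})
    (hadj : ∀ i j : Fin (k + 1), (φ i).1 * (φ j).1 = ⊥ ↔ (i : ℕ) + (j : ℕ) ≥ k) :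
    ∀ i : Fin (k + 1), (φ i).1 = (φ ⟨1, by omega⟩).1 ^ (i : ℕ) := by
  have inj : ∀ i j : Fin (k+1), (φ i).1 = (φ j).1 → i = j := fun i j h =>
    φ.injective (Subtype.ext h)
  -- products with a principal ideal
  have spanmul : ∀ (z : A) (I : Ideal A),
      Ideal.span {z} * I = ⊥ ↔ ∀ g ∈ I, z * g = 0 := by
    intro z I
    constructor
    · intro h g hg
      have hz : z * g ∈ Ideal.span {z} * I :=
        Ideal.mul_mem_mul (Ideal.mem_span_singleton_self z) hg
      rw [h] at hz
      exact Ideal.mem_bot.mp hz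
    · intro h
      rw [eq_bot_iff, Ideal.mul_le]
      intro r hr s hs
      rcases Ideal.mem_span_singleton'.mp hr with ⟨c, rfl⟩
      rw [Ideal.mem_bot, mul_assoc, h s hs, mul_zero]
  have hkk : k < k + 1 := by omega
  -- φ(k) = ⊥
  have hbot : (φ ⟨k, hkk⟩).1 = ⊥ := by
    have hP : (⊥ : Ideal A).IsPrincipal :=
      ⟨⟨0, (Ideal.span_singleton_eq_bot.mpr rfl).symm⟩⟩
    set c := φ.symm ⟨⊥, hP⟩ with hc
    have h1 : (φ c).1 = ⊥ := by rw [hc, Equiv.apply_symm_apply]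
    have h2 : (c : ℕ) + ((⟨0, by omega⟩ : Fin (k+1)) : ℕ) ≥ k :=
      (hadj c ⟨0, by omega⟩).mp (by rw [h1]; exact le_bot_iff.mp Ideal.mul_le_left)
    have h3 : (c : ℕ) = k := by have := c.isLt; simp at h2; omega
    have : (⟨k, hkk⟩ : Fin (k+1)) = c := by ext; simp [h3]
    rw [this, h1]
  -- φ(0) = ⊤
  have htop : (φ ⟨0, by omega⟩).1 = ⊤ := by
    have hP : (⊤ : Ideal A).IsPrincipal := ⟨⟨1, by simp⟩⟩
    set c := φ.symm ⟨⊤, hP⟩ with hc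
    have h1 : (φ c).1 = ⊤ := by rw [hc, Equiv.apply_symm_apply]
    have h2 : ¬ ((φ c).1 * (φ ⟨k-1, by omega⟩).1 = ⊥) := by
      rw [h1, Ideal.top_mul]
      intro hb
      have := inj _ _ (hb.trans hbot.symm)
      simp [Fin.ext_iff] at this
      omega
    rw [hadj] at h2
    have h3 : (c : ℕ) = 0 := by
      simp at h2; omega
    have : (⟨0, by omega⟩ : Fin (k+1)) = c := by ext; simp [h3]
    rw [this, h1]
  -- order reversal
  have orderRev : ∀ i j : Fin (k+1), (φ i).1 ≤ (φ j).1 → (j : ℕ) ≤ (i : ℕ) := by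
    intro i j hle
    have hj := j.isLt
    have h1 : (φ j).1 * (φ ⟨k - j, by omega⟩).1 = ⊥ :=
      (hadj _ _).mpr (by simp; omega)
    have h2 : (φ i).1 * (φ ⟨k - j, by omega⟩).1 = ⊥ :=
      le_bot_iff.mp (h1 ▸ Ideal.mul_mono_left hle)
    have := (hadj _ _).mp h2
    simp at this
    omega
  -- the principal ideals form a chain
  have chain : ∀ t j : Fin (k+1), (t : ℕ) ≤ (j : ℕ) → (φ j).1 ≤ (φ t).1 := by
    intro t j htj
    rcases eq_or_lt_of_le htj with heq | hlt
    · have : t = j := Fin.ext heq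
      rw [this]
    · have ht := t.isLt
      have hj := j.isLt
      obtain ⟨x, hx⟩ := (φ t).2
      replace hx : (φ t).1 = Ideal.span {x} := hx
      intro y hy
      -- z = x + y generates φ t
      have hzP : (Ideal.span {x + y}).IsPrincipal := ⟨⟨x + y, rfl⟩⟩
      set u := φ.symm ⟨Ideal.span {x + y}, hzP⟩ with hu
      have hu1 : (φ u).1 = Ideal.span {x + y} := by rw [hu, Equiv.apply_symm_apply]
      have hxmem : x ∈ (φ t).1 := by rw [hx]; exact Ideal.mem_span_singleton_self x
      -- (x+y) * φ(k - t) = ⊥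
      have hz1 : (φ u).1 * (φ ⟨k - (t : ℕ), by omega⟩).1 = ⊥ := by
        rw [hu1, spanmul]
        intro g hg
        have hxg : x * g = 0 := by
          have : x * g ∈ (φ t).1 * (φ ⟨k - (t : ℕ), by omega⟩).1 :=
            Ideal.mul_mem_mul hxmem hg
          rw [(hadj _ _).mpr (by simp; omega)] at this
          exact Ideal.mem_bot.mp this
        have hyg : y * g = 0 := by
          have : y * g ∈ (φ j).1 * (φ ⟨k - (t : ℕ), by omega⟩).1 :=
            Ideal.mul_mem_mul hy hg
          rw [(hadj _ _).mpr (by simp; omega)] at this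
          exact Ideal.mem_bot.mp this
        rw [add_mul, hxg, hyg, add_zero]
      have hut : (t : ℕ) ≤ (u : ℕ) := by
        have := (hadj _ _).mp hz1
        have hu2 := u.isLt
        simp at this
        omega
      -- u = t
      have huval : (u : ℕ) = (t : ℕ) := by
        by_contra hne
        have hu3 : (t : ℕ) + 1 ≤ (u : ℕ) := by omega
        -- then z annihilates φ(k - t - 1), hence so does x, contradiction
        have hz2 : (φ u).1 * (φ ⟨k - (t : ℕ) - 1, by omega⟩).1 = ⊥ :=
          (hadj _ _).mpr (by simp; omega)
        have hx2 : (φ t).1 * (φ ⟨k - (t : ℕ) - 1, by omega⟩).1 = ⊥ := by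
          rw [hx, spanmul]
          intro g hg
          have hzg : (x + y) * g = 0 := by
            rw [hu1, spanmul] at hz2
            exact hz2 g hg
          have hyg : y * g = 0 := by
            have : y * g ∈ (φ j).1 * (φ ⟨k - (t : ℕ) - 1, by omega⟩).1 :=
              Ideal.mul_mem_mul hy hg
            rw [(hadj _ _).mpr (by simp; omega)] at this
            exact Ideal.mem_bot.mp this
          have := hzg
          rw [add_mul, hyg, add_zero] at this
          exact this
        have := (hadj _ _).mp hx2
        simp at this
        omega
      have huu : u = t := Fin.ext huval
      rw [huu] at hu1
      have hz3 : x + y ∈ (φ t).1 := by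
        rw [hu1]; exact Ideal.mem_span_singleton_self _
      have := (φ t).1.sub_mem hz3 hxmem
      simpa using this
  have h1k : 1 < k + 1 := by omega
  have hstep : ∀ d t (ht : t < k), k - t ≤ d →
      (φ ⟨1, h1k⟩).1 * (φ ⟨t, by omega⟩).1 = (φ ⟨t + 1, by omega⟩).1 := by
    intro d
    induction d with
    | zero => intro t ht h; omega
    | succ d ih =>
      intro t ht hd
      by_cases hlast : t = k - 1
      · subst hlast
        have e1 : (φ ⟨1, h1k⟩).1 * (φ ⟨k - 1, by omega⟩).1 = ⊥ :=
          (hadj _ _).mpr (by simp; omega)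
        rw [e1]
        have : (⟨k - 1 + 1, by omega⟩ : Fin (k+1)) = ⟨k, hkk⟩ := by ext; simp; omega
        rw [this, hbot]
      · have ht2 : t < k - 1 := by omega
        obtain ⟨π, hπ⟩ := (φ ⟨1, h1k⟩).2
        replace hπ : (φ ⟨1, h1k⟩).1 = Ideal.span {π} := hπ
        obtain ⟨x, hx⟩ := (φ ⟨t, by omega⟩ : {I : Ideal A // I.IsPrincipal}).2
        replace hx : (φ ⟨t, by omega⟩ : {I : Ideal A // I.IsPrincipal}).1
            = Ideal.span {x} := hx
        have hπu : ¬ IsUnit π := by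
          intro hu
          have : (φ ⟨1, h1k⟩).1 = ⊤ := by rw [hπ, Ideal.span_singleton_eq_top]; exact hu
          have := inj _ _ (this.trans htop.symm)
          simp [Fin.ext_iff] at this
        have hprod : (φ ⟨1, h1k⟩).1 * (φ ⟨t, by omega⟩).1 = Ideal.span {π * x} := by
          rw [hπ, hx, Ideal.span_singleton_mul_span_singleton]
        have hPz : (Ideal.span {π * x}).IsPrincipal := ⟨⟨π * x, rfl⟩⟩
        set u := φ.symm ⟨Ideal.span {π * x}, hPz⟩ with hu
        have hu1 : (φ u).1 = Ideal.span {π * x} := by rw [hu, Equiv.apply_symm_apply]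
        -- u ≥ t
        have hut : (t : ℕ) ≤ (u : ℕ) := by
          have := orderRev u ⟨t, by omega⟩
            (le_of_eq_of_le (hu1.trans hprod.symm) Ideal.mul_le_right)
          simpa using this
        -- u ≠ t
        have hune : (u : ℕ) ≠ t := by
          intro he
          have huu : u = ⟨t, by omega⟩ := Fin.ext he
          rw [huu, hx] at hu1
          have hxm : x ∈ Ideal.span {π * x} := by
            rw [← hu1]; exact Ideal.mem_span_singleton_self x
          obtain ⟨c, hc⟩ := Ideal.mem_span_singleton'.mp hxm
          have hx0 : x * (1 - c * π) = 0 := by linear_combination -hc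
          have hcu : IsUnit (1 - c * π) := by
            apply IsLocalRing.isUnit_one_sub_self_of_mem_nonunits
            rw [mem_nonunits_iff]
            intro hcu
            exact hπu (isUnit_of_mul_isUnit_right hcu)
          have hx00 : x = 0 := (IsUnit.mul_left_eq_zero hcu).mp hx0
          have hb2 : (φ ⟨t, by omega⟩ : {I : Ideal A // I.IsPrincipal}).1 = ⊥ := by
            rw [hx, hx00]
            exact Ideal.span_singleton_eq_bot.mpr rfl
          have := inj _ _ (hb2.trans hbot.symm)
          simp [Fin.ext_iff] at this
          omega
        -- u ≠ k
        have hunk : (u : ℕ) ≠ k := by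
          intro he
          have huu : u = ⟨k, hkk⟩ := Fin.ext he
          rw [huu, hbot] at hu1
          have : (φ ⟨1, h1k⟩).1 * (φ ⟨t, by omega⟩).1 = ⊥ := by rw [hprod, ← hu1]
          have := (hadj _ _).mp this
          simp at this
          omega
        -- u = t + 1, by downward induction (otherwise contradiction with step at t+1)
        have huval : (u : ℕ) = t + 1 := by
          by_contra hne
          have hu4 : t + 2 ≤ (u : ℕ) := by omega
          have ihs := ih (t + 1) (by omega) (by omega)
          obtain ⟨y, hy⟩ := (φ ⟨t + 1, by omega⟩ : {I : Ideal A // I.IsPrincipal}).2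
          replace hy : (φ ⟨t + 1, by omega⟩ : {I : Ideal A // I.IsPrincipal}).1
              = Ideal.span {y} := hy
          -- y ∈ φ t, so y = a * x
          have hym : y ∈ (φ ⟨t, by omega⟩ : {I : Ideal A // I.IsPrincipal}).1 := by
            apply chain ⟨t, by omega⟩ ⟨t + 1, by omega⟩ (by simp)
            rw [hy]; exact Ideal.mem_span_singleton_self y
          rw [hx] at hym
          obtain ⟨a, ha⟩ := Ideal.mem_span_singleton'.mp hym
          -- a not a unit
          have hau : ¬ IsUnit a := by
            intro hau
            have hyx : Ideal.span {y} = Ideal.span {x} := by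
              rw [← ha]
              exact Ideal.span_singleton_mul_left_unit hau x
            have : (φ ⟨t + 1, by omega⟩ : {I : Ideal A // I.IsPrincipal}).1
                = (φ ⟨t, by omega⟩ : {I : Ideal A // I.IsPrincipal}).1 := by
              rw [hx, hy, hyx]
            have := inj _ _ this
            simp [Fin.ext_iff] at this
          -- φ(t+2) = span {π * y}
          have hprod2 : (φ ⟨t + 1 + 1, by omega⟩ : {I : Ideal A // I.IsPrincipal}).1
              = Ideal.span {π * y} := by
            rw [← ihs, hπ, hy, Ideal.span_singleton_mul_span_singleton]
          -- span {π x} = φ u ≤ φ (t+2) = span {π y}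
          have hle : Ideal.span {π * x} ≤ Ideal.span {π * y} := by
            rw [← hu1, ← hprod2]
            exact chain ⟨t + 1 + 1, by omega⟩ u (by simp; omega)
          have hπxm : π * x ∈ Ideal.span {π * y} :=
            hle (Ideal.mem_span_singleton_self _)
          obtain ⟨b, hb⟩ := Ideal.mem_span_singleton'.mp hπxm
          -- π x = b π y = b a π x
          have hx0 : (π * x) * (1 - b * a) = 0 := by
            linear_combination -hb - b * π * ha
          have hcu : IsUnit (1 - b * a) := by
            apply IsLocalRing.isUnit_one_sub_self_of_mem_nonunits
            rw [mem_nonunits_iff]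
            intro hcu
            exact hau (isUnit_of_mul_isUnit_right hcu)
          have hπx0 : π * x = 0 := (IsUnit.mul_left_eq_zero hcu).mp hx0
          have hub : (φ u).1 = ⊥ := by
            rw [hu1, hπx0]
            exact Ideal.span_singleton_eq_bot.mpr rfl
          have := inj _ _ (hub.trans hbot.symm)
          simp [Fin.ext_iff] at this
          omega
        have huu : u = ⟨t + 1, by omega⟩ := Fin.ext huval
        rw [hprod, ← hu1, huu]
  -- main induction
  have main : ∀ n (hn : n ≤ k),
      (φ ⟨n, by omega⟩).1 = (φ ⟨1, h1k⟩).1 ^ n := by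
    intro n
    induction n with
    | zero => intro _; rw [pow_zero, Ideal.one_eq_top]; exact htop
    | succ n ih =>
      intro hn
      rw [← hstep (k - n) n (by omega) (by omega), ih (by omega), pow_succ, mul_comm]
  intro i
  have hi := i.isLt
  have := main (i : ℕ) (by omega)
  have heq : (⟨(i : ℕ), by omega⟩ : Fin (k+1)) = i := Fin.ext rfl
  rw [heq] at this
  exact this
end

section
/- Let (A, m) be a nonzero local artinian commutative ring and let k be the least positive integer such that m^k = 0 (which exists since m is nilpotent). Then A is a principal ideal ring if and only if there is a bijection φ from {0, 1, …, k} onto the set of principal ideals of A such that for all i, j ∈ {0, …, k}: φ(i)·φ(j) = (0) if and only if i + j ≥ k (i.e., ζ(A, ∼) ≅ SG_k). -/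
open Ideal IsLocalRing

/-- If the maximal ideal is principal and nilpotent, every ideal is a power of it. -/
lemma aux_ideal_eq_pow_of_span {A : Type*} [CommRing A] [IsLocalRing A]
    (x : A) (hx : maximalIdeal A = Ideal.span {x})
    {k : ℕ} (hmk : (maximalIdeal A) ^ k = ⊥) (I : Ideal A) :
    ∃ i ≤ k, I = (maximalIdeal A) ^ i := by
  classical
  by_cases hI : I = ⊥
  · exact ⟨k, le_rfl, hI.trans hmk.symm⟩
  have hPk : ¬ I ≤ (maximalIdeal A) ^ k := by
    rw [hmk]; exact fun h => hI (le_bot_iff.mp h)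
  have hex : ∃ n, ¬ I ≤ (maximalIdeal A) ^ n := ⟨k, hPk⟩
  have hnle : Nat.find hex ≤ k := Nat.find_le hPk
  have hnspec : ¬ I ≤ (maximalIdeal A) ^ (Nat.find hex) := Nat.find_spec hex
  have hn0 : Nat.find hex ≠ 0 := by
    intro h
    exact hnspec (by rw [h, pow_zero, Ideal.one_eq_top]; exact le_top)
  obtain ⟨i, hni⟩ : ∃ i, Nat.find hex = i + 1 :=
    ⟨Nat.find hex - 1, (Nat.succ_pred_eq_of_ne_zero hn0).symm⟩
  have hIle : I ≤ (maximalIdeal A) ^ i := by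
    have := Nat.find_min hex (m := i) (by omega)
    exact not_not.mp this
  rw [hni] at hnspec hnle
  obtain ⟨y, hyI, hyn⟩ := SetLike.not_le_iff_exists.mp hnspec
  have hyi : y ∈ Ideal.span {x ^ i} := by
    rw [← Ideal.span_singleton_pow, ← hx]; exact hIle hyI
  obtain ⟨c, hc⟩ := Ideal.mem_span_singleton'.mp hyi
  have hxm : x ∈ maximalIdeal A := by rw [hx]; exact Ideal.mem_span_singleton_self x
  have hcu : IsUnit c := by
    by_contra hcu
    apply hyn
    have hcm : c ∈ maximalIdeal A := (IsLocalRing.mem_maximalIdeal c).mpr hcu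
    rw [← hc, pow_succ, mul_comm]
    exact Ideal.mul_mem_mul hcm (pow_mem_pow hxm i)
  obtain ⟨u, rfl⟩ := hcu
  have hxiI : x ^ i ∈ I := by
    have h1 : (↑u⁻¹ : A) * y ∈ I := I.mul_mem_left _ hyI
    rwa [← hc, ← mul_assoc, Units.inv_mul, one_mul] at h1
  refine ⟨i, by omega, le_antisymm hIle ?_⟩
  rw [hx, Ideal.span_singleton_pow]
  exact (Ideal.span_le).mpr (Set.singleton_subset_iff.mpr hxiI)

/-- Let `(A, m)` be a nonzero local artinian commutative ring and
`k` the least positive integer with `m^k = 0`.  Then `A` is a principal ideal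
ring iff `ζ(A,∼) ≅ SG_k`, i.e. iff there is a bijection `φ` from `{0,…,k}` onto
the principal ideals of `A` such that `φ(i)·φ(j) = 0` iff `i + j ≥ k`. -/
theorem local_artinian_PIR_iff_staircase
    {A : Type*} [CommRing A] [Nontrivial A] [IsLocalRing A] [IsArtinianRing A]
    (k : ℕ) (hk : 0 < k) (hmk : (IsLocalRing.maximalIdeal A) ^ k = ⊥)
    (hleast : ∀ j : ℕ, 0 < j → (IsLocalRing.maximalIdeal A) ^ j = ⊥ → k ≤ j) :
    IsPrincipalIdealRing A ↔
      ∃ φ : Fin (k + 1) ≃ {I : Ideal A // I.IsPrincipal},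
        ∀ i j : Fin (k + 1), (φ i).1 * (φ j).1 = ⊥ ↔ (i : ℕ) + (j : ℕ) ≥ k := by
  classical
  set m := IsLocalRing.maximalIdeal A with hm
  -- powers of m vanish exactly from k on
  have hbot : ∀ i : ℕ, m ^ i = ⊥ ↔ k ≤ i := by
    intro i
    constructor
    · intro h
      rcases Nat.eq_zero_or_pos i with h0 | h0
      · exfalso
        rw [h0, pow_zero, Ideal.one_eq_top] at h
        have h1 : (1 : A) ∈ (⊤ : Ideal A) := Submodule.mem_top
        rw [h] at h1
        exact one_ne_zero ((Submodule.mem_bot A).mp h1)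
      · exact hleast i h0 h
    · intro h
      have := Ideal.pow_le_pow_right (I := m) h
      rw [hmk] at this
      exact le_bot_iff.mp this
  -- strict descent of powers below k
  have hlt : ∀ i : ℕ, i < k → m ^ (i + 1) < m ^ i := by
    intro i hik
    refine lt_of_le_of_ne (Ideal.pow_le_pow_right (Nat.le_succ i)) ?_
    intro heq
    have hstab : ∀ n : ℕ, m ^ (i + n) = m ^ i := by
      intro n
      induction n with
      | zero => rfl
      | succ n ih => rw [← Nat.add_assoc, pow_succ, ih, ← pow_succ, ← heq]
    have : m ^ i = ⊥ := by
      rw [← hstab k]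
      exact (hbot (i + k)).mpr (by omega)
    exact absurd ((hbot i).mp this) (by omega)
  -- from a principal maximal ideal conclude PIR (used in both directions via aux lemma)
  constructor
  · -- forward: PIR → staircase
    intro hPIR
    obtain ⟨x, hx⟩ := (IsPrincipalIdealRing.principal m : m.IsPrincipal)
    have hprin : ∀ i : ℕ, (m ^ i).IsPrincipal := by
      intro i
      exact ⟨x ^ i, by rw [hx]; exact Ideal.span_singleton_pow x i⟩
    set f : Fin (k + 1) → {I : Ideal A // I.IsPrincipal} :=
      fun i => ⟨m ^ (i : ℕ), hprin i⟩ with hf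
    have hinjpow : ∀ i j : ℕ, i < j → j ≤ k → m ^ i ≠ m ^ j := by
      intro i j hij hjk heq
      have h1 : m ^ j ≤ m ^ (i + 1) := Ideal.pow_le_pow_right (by omega)
      have h2 : m ^ i ≤ m ^ (i + 1) := heq ▸ h1
      exact (hlt i (by omega)).ne (le_antisymm (Ideal.pow_le_pow_right (Nat.le_succ i)) h2)
    have hbij : Function.Bijective f := by
      constructor
      · intro i j hij
        have h : m ^ (i : ℕ) = m ^ (j : ℕ) := congrArg Subtype.val hij
        rcases lt_trichotomy (i : ℕ) (j : ℕ) with h' | h' | h'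
        · exact absurd h (hinjpow _ _ h' (by omega))
        · exact Fin.ext h'
        · exact absurd h.symm (hinjpow _ _ h' (by omega))
      · rintro ⟨I, hI⟩
        obtain ⟨i, hik, hIi⟩ := aux_ideal_eq_pow_of_span x hx hmk I
        exact ⟨⟨i, by omega⟩, by simp [hf, hIi]; rfl⟩
    refine ⟨Equiv.ofBijective f hbij, ?_⟩
    intro i j
    show m ^ (i : ℕ) * m ^ (j : ℕ) = ⊥ ↔ _
    rw [← pow_add]
    exact (hbot _).trans ge_iff_le.symm
  · -- reverse: staircase → PIR
    rintro ⟨φ, -⟩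
    by_cases hk1 : k = 1
    · -- m = ⊥ : every ideal is ⊥ or ⊤
      subst hk1
      have hmb : m = ⊥ := by rw [← pow_one m]; exact hmk
      constructor
      intro I
      rcases eq_or_ne I ⊥ with h | h
      · exact ⟨0, by rw [h]; exact (Ideal.span_singleton_eq_bot.mpr rfl).symm⟩
      · obtain ⟨y, hyI, hy0⟩ := SetLike.not_le_iff_exists.mp
          (show ¬ I ≤ ⊥ from fun hle => h (le_bot_iff.mp hle))
        have hyu : IsUnit y := by
          by_contra hyu
          exact hy0 (hmb ▸ (IsLocalRing.mem_maximalIdeal y).mpr hyu)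
        have : I = ⊤ := Ideal.eq_top_of_isUnit_mem I hyI hyu
        exact ⟨1, by rw [this]; simp⟩
    have hk2 : 2 ≤ k := by omega
    -- choose elements a i ∈ m^i \ m^(i+1)
    have hexa : ∀ i : ℕ, ∃ y : A, 0 < i → i < k → y ∈ m ^ i ∧ y ∉ m ^ (i + 1) := by
      intro i
      by_cases h : 0 < i ∧ i < k
      · obtain ⟨y, hy1, hy2⟩ := SetLike.exists_of_lt (hlt i h.2)
        exact ⟨y, fun _ _ => ⟨hy1, hy2⟩⟩
      · exact ⟨0, fun h1 h2 => absurd ⟨h1, h2⟩ h⟩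
    choose a ha using hexa
    set J : ℕ → Ideal A := fun i =>
      if i = 0 then ⊤ else if k ≤ i then ⊥ else Ideal.span {a i} with hJ
    have hJ0 : J 0 = ⊤ := by simp [hJ]
    have hJk : ∀ i, k ≤ i → J i = ⊥ := by
      intro i hi
      have h0 : ¬ i = 0 := by omega
      simp [hJ, hi, h0]
    have hJmid : ∀ i, 0 < i → i < k → J i = Ideal.span {a i} := by
      intro i h1 h2
      have h0 : ¬ i = 0 := by omega
      have h3 : ¬ k ≤ i := by omega
      simp [hJ, h0, h3]
    have hJle : ∀ i, 0 < i → J i ≤ m ^ i := by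
      intro i h1
      by_cases h2 : i < k
      · rw [hJmid i h1 h2]
        exact (Ideal.span_le).mpr (Set.singleton_subset_iff.mpr (ha i h1 h2).1)
      · rw [hJk i (by omega)]; exact bot_le
    have hJP : ∀ i, (J i).IsPrincipal := by
      intro i
      rcases Nat.eq_zero_or_pos i with h | h
      · exact ⟨1, by rw [h, hJ0]; simp⟩
      by_cases h2 : i < k
      · exact ⟨a i, by rw [hJmid i h h2]⟩
      · exact ⟨0, by rw [hJk i (by omega)]; exact (Ideal.span_singleton_eq_bot.mpr rfl).symm⟩
    have hJne : ∀ i j : ℕ, i < j → j ≤ k → J i ≠ J j := by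
      intro i j hij hjk heq
      rcases Nat.eq_zero_or_pos i with h0 | h0
      · -- J i = ⊤ but J j ≤ m < ⊤
        have hjle : J j ≤ m := (hJle j (by omega)).trans (Ideal.pow_le_self (by omega))
        rw [h0, hJ0] at heq
        have htop : (⊤ : Ideal A) ≤ m := by rw [heq]; exact hjle
        exact (IsLocalRing.maximalIdeal.isMaximal A).ne_top (top_le_iff.mp htop)
      · have hik : i < k := by omega
        have hai : a i ∈ J i := by
          rw [hJmid i h0 hik]; exact Ideal.mem_span_singleton_self _
        have hjle : J j ≤ m ^ (i + 1) :=
          (hJle j (by omega)).trans (Ideal.pow_le_pow_right (by omega))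
        exact (ha i h0 hik).2 (hjle (heq ▸ hai))
    -- the k+1 ideals J 0, …, J k exhaust all principal ideals
    set S : Fin (k + 1) → {I : Ideal A // I.IsPrincipal} :=
      fun i => ⟨J (i : ℕ), hJP _⟩ with hS
    have hSinj : Function.Injective S := by
      intro i j hij
      have h : J (i : ℕ) = J (j : ℕ) := congrArg Subtype.val hij
      rcases lt_trichotomy (i : ℕ) (j : ℕ) with h' | h' | h'
      · exact absurd h (hJne _ _ h' (by omega))
      · exact Fin.ext h'
      · exact absurd h.symm (hJne _ _ h' (by omega))
    have hgsurj : Function.Surjective (φ.symm ∘ S) :=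
      Finite.injective_iff_surjective.mp (φ.symm.injective.comp hSinj)
    have hSsurj : ∀ P : {I : Ideal A // I.IsPrincipal}, ∃ i, S i = P := by
      intro P
      obtain ⟨i, hi⟩ := hgsurj (φ.symm P)
      exact ⟨i, φ.symm.injective hi⟩
    have hgen : ∀ y : A, ∃ i : Fin (k + 1), Ideal.span {y} = J (i : ℕ) := by
      intro y
      obtain ⟨i, hi⟩ := hSsurj ⟨Ideal.span {y}, ⟨y, rfl⟩⟩
      exact ⟨i, (congrArg Subtype.val hi).symm⟩
    -- every element of m \ m² generates J 1
    have hkey : ∀ y : A, y ∈ m → y ∉ m ^ 2 → Ideal.span {y} = J 1 := by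
      intro y hym hym2
      obtain ⟨i, hi⟩ := hgen y
      rcases Nat.eq_zero_or_pos (i : ℕ) with h0 | h0
      · exfalso
        rw [h0, hJ0] at hi
        exact (IsLocalRing.mem_maximalIdeal y).mp hym (Ideal.span_singleton_eq_top.mp hi)
      by_cases h2 : (i : ℕ) < k
      · rcases Nat.lt_or_ge (i : ℕ) 2 with h1 | h1
        · have : (i : ℕ) = 1 := by omega
          rw [hi, this]
        · exfalso
          have : Ideal.span {y} ≤ m ^ 2 := by
            rw [hi]
            exact (hJle _ h0).trans (Ideal.pow_le_pow_right h1)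
          exact hym2 (this (Ideal.mem_span_singleton_self y))
      · exfalso
        rw [hJk _ (by omega)] at hi
        have : y = 0 := Ideal.span_singleton_eq_bot.mp hi
        exact hym2 (this ▸ Submodule.zero_mem _)
    -- m ≤ J 1 ⊔ m^2
    have hm2 : m ≤ J 1 ⊔ m ^ 2 := by
      intro y hy
      by_cases h : y ∈ m ^ 2
      · exact Submodule.mem_sup_right h
      · have := hkey y hy h
        exact Submodule.mem_sup_left (this ▸ Ideal.mem_span_singleton_self y)
    -- iterate: m ≤ J 1 ⊔ m^(2+n)
    have hiter : ∀ n : ℕ, m ≤ J 1 ⊔ m ^ (2 + n) := by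
      intro n
      induction n with
      | zero => exact hm2
      | succ n ih =>
        have hsq : m ^ 2 ≤ J 1 ⊔ m ^ (2 + n + 1) := by
          have h1 : m ^ 2 = m * m := by ring
          have h2 : m * m ≤ m * (J 1 ⊔ m ^ (2 + n)) := Ideal.mul_mono_right ih
          rw [Ideal.mul_sup] at h2
          have h3 : m * J 1 ≤ J 1 := by rw [mul_comm]; exact Ideal.mul_le_left
          have h4 : m * m ^ (2 + n) = m ^ (2 + n + 1) := by rw [pow_succ, mul_comm]
          calc m ^ 2 = m * m := h1
            _ ≤ m * J 1 ⊔ m * m ^ (2 + n) := h2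
            _ ≤ J 1 ⊔ m ^ (2 + n + 1) := sup_le_sup h3 (le_of_eq h4)
        have h5 : m ≤ J 1 ⊔ (J 1 ⊔ m ^ (2 + n + 1)) :=
          hm2.trans (sup_le_sup le_rfl hsq)
        rw [← sup_assoc, sup_idem] at h5
        exact h5
    have hmJ1 : m = Ideal.span {a 1} := by
      have h1 : m ≤ J 1 := by
        have := hiter (k - 2)
        rw [show 2 + (k - 2) = k by omega, hmk, sup_bot_eq] at this
        exact this
      rw [hJmid 1 one_pos (by omega)] at h1
      refine le_antisymm h1 ?_
      refine (Ideal.span_le).mpr (Set.singleton_subset_iff.mpr ?_)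
      have := (ha 1 one_pos (by omega)).1
      rwa [pow_one] at this
    constructor
    intro I
    obtain ⟨i, hik, hIi⟩ := aux_ideal_eq_pow_of_span (a 1) hmJ1 hmk I
    exact ⟨(a 1) ^ i, by rw [hIi, ← hm, hmJ1]; exact Ideal.span_singleton_pow _ _⟩
end

section
/- Let A be a commutative ring and a₁, a₂ ∈ A with Ann(a₁) ∩ Ann(a₂) = 0. If x₁, x₂ ∈ Ann(a₂) are such that the images of x₁ and x₂ in the quotient ring A/Ann(a₁) generate the same ideal of A/Ann(a₁), then (x₁) = (x₂) in A. -/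
private lemma key_dvd {A : Type*} [CommRing A] (a₁ a₂ x₁ x₂ : A)
    (horth : ∀ x : A, x * a₁ = 0 → x * a₂ = 0 → x = 0)
    (hx₁ : x₁ * a₂ = 0) (hx₂ : x₂ * a₂ = 0)
    (h : (Ideal.Quotient.mk (Ideal.span {a₁}).annihilator x₁) ∈
      Ideal.span {Ideal.Quotient.mk (Ideal.span {a₁}).annihilator x₂}) :
    x₂ ∣ x₁ := by
  rw [Ideal.mem_span_singleton] at h
  obtain ⟨c, hc⟩ := h
  obtain ⟨c, rfl⟩ := Ideal.Quotient.mk_surjective c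
  rw [← map_mul, Ideal.Quotient.eq] at hc
  have h1 : (x₁ - x₂ * c) * a₁ = 0 := by
    simpa [smul_eq_mul] using Submodule.mem_annihilator.mp hc a₁ (Ideal.subset_span rfl)
  have h2 : (x₁ - x₂ * c) * a₂ = 0 := by
    linear_combination hx₁ - c * hx₂
  have := horth _ h1 h2
  exact ⟨c, by linear_combination this⟩

/-- Let `A` be a commutative ring and `a₁, a₂ ∈ A` with
`Ann(a₁) ∩ Ann(a₂) = 0`.  If `x₁, x₂ ∈ Ann(a₂)` are such that their images in
`A/Ann(a₁)` generate the same ideal, then `(x₁) = (x₂)` in `A`. -/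
theorem span_eq_of_span_eq_in_quotient
    {A : Type*} [CommRing A] (a₁ a₂ x₁ x₂ : A)
    (horth : ∀ x : A, x * a₁ = 0 → x * a₂ = 0 → x = 0)
    (hx₁ : x₁ * a₂ = 0) (hx₂ : x₂ * a₂ = 0)
    (hq : Ideal.span {Ideal.Quotient.mk (Ideal.span {a₁}).annihilator x₁} =
          Ideal.span {Ideal.Quotient.mk (Ideal.span {a₁}).annihilator x₂}) :
    Ideal.span {x₁} = Ideal.span {x₂} := by
  have h1 : x₂ ∣ x₁ := key_dvd a₁ a₂ x₁ x₂ horth hx₁ hx₂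
    (hq ▸ Ideal.subset_span rfl)
  have h2 : x₁ ∣ x₂ := key_dvd a₁ a₂ x₂ x₁ horth hx₂ hx₁
    (hq ▸ Ideal.subset_span rfl)
  apply le_antisymm <;> rw [Ideal.span_singleton_le_span_singleton] <;> assumption
end
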